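/- arXiv:1904.02027 — 3 statements merged into one kernel-verified Lean document; each statement's English description precedes it below -/
import Mathlib

section
/- Let Φ be a non-uniform random 2-SAT formula on n variables with probability vector p satisfying p₁² = Θ(Σ_{i=1}^n pᵢ²) and q_max = o(1). Then: (i) if m = o((C·p₁·(Σ_{i=2}^n pᵢ²)^{1/2})^{-1}), Φ is satisfiable with probability at least 1 − o(1); and (ii) there exists a constant ε ∈ (0,1) such that for all m ≤ (1−ε)·(C·p₁·(Σ_{i=2}^n pᵢ²)^{1/2})^{-1}, Φ is satisfiable with probability at least some positive constant. -/
/-!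
View the clauses of a 2-CNF formula as edges between their two variables. If no set of clauses
forms a cycle, every set of `s` clauses touches at least `s` variables, so by Hall's theorem each
clause can be given a variable of its own and that variable set to satisfy it. Hence
`P(unsat) ≤ E[#cycles]`. Distinct clause slots are independent and a clause on `{a, b}` has
probability at most `4C pₐ p_b`, so cycles of length `k` contribute at most
`mᵏ (4C)ᵏ k T S^(k-1)`, where `T = ∑ pᵢ²`, `S = ∑_{i ≥ 2} pᵢ²`, and the factor `k T` accounts for
the one vertex of the cycle that may be the heaviest variable. When `T = O(p₁²)` this is at most
`k uᵏ` with `u ≍ m C p₁ √S = m / coarseBound`, and the geometric series gives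
`P(unsat) = O(u²)`.
-/

open Finset Filter Asymptotics

open scoped Classical

/-- The probability of drawing a given ordered 2-clause (an ordered pair of literals over
distinct variables); an unordered 2-clause over variables `i ≠ j` then has total probability
`(C/2)·pᵢ·pⱼ` where `C = (1 - ∑ pᵢ²)⁻¹`. -/
noncomputable def clauseProb2 (n : ℕ) (p : ℕ → ℝ) (c : (Fin n × Bool) × (Fin n × Bool)) : ℝ :=
  if c.1.1 ≠ c.2.1 then
    (1 - ∑ i ∈ Finset.range n, p i ^ 2)⁻¹ / 4 * p c.1.1.1 * p c.2.1.1
  else 0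

/-- The probability of drawing a given formula: `m` clauses drawn independently. -/
noncomputable def formulaProb2 (n m : ℕ) (p : ℕ → ℝ)
    (Φ : Fin m → (Fin n × Bool) × (Fin n × Bool)) : ℝ :=
  ∏ j, clauseProb2 n p (Φ j)

/-- Satisfiability of a 2-CNF formula: a literal `(x, b)` is satisfied by an assignment `a`
iff `a x = b`. -/
def Sat2 {n m : ℕ} (Φ : Fin m → (Fin n × Bool) × (Fin n × Bool)) : Prop :=
  ∃ a : Fin n → Bool, ∀ j, a (Φ j).1.1 = (Φ j).1.2 ∨ a (Φ j).2.1 = (Φ j).2.2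

/-- The probability that a non-uniform random 2-SAT formula with `n` variables, `m` clauses
and variable distribution `p` is satisfiable. -/
noncomputable def probSat2 (n m : ℕ) (p : ℕ → ℝ) : ℝ :=
  ∑ Φ : Fin m → (Fin n × Bool) × (Fin n × Bool),
    if Sat2 Φ then formulaProb2 n m p Φ else 0

/-- The probability that a non-uniform random 2-SAT formula is unsatisfiable. -/
noncomputable def probUnsat2 (n m : ℕ) (p : ℕ → ℝ) : ℝ :=
  ∑ Φ : Fin m → (Fin n × Bool) × (Fin n × Bool),
    if ¬ Sat2 Φ then formulaProb2 n m p Φ else 0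

/-- The normalization constant `C = (1 - ∑ pᵢ²)⁻¹`. -/
noncomputable def Cconst (n : ℕ) (p : ℕ → ℝ) : ℝ :=
  (1 - ∑ i ∈ Finset.range n, p i ^ 2)⁻¹

/-- The maximum clause probability `q_max = (C/2)·p₁·p₂`. -/
noncomputable def qmax2 (n : ℕ) (p : ℕ → ℝ) : ℝ :=
  Cconst n p / 2 * p 0 * p 1

/-- `p n` is a probability vector on `n` variables (indexed `0,…,n-1`), sorted decreasingly,
with all entries positive. -/
def ProbEnsemble (p : ℕ → ℕ → ℝ) : Prop :=
  ∀ n, 1 ≤ n →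
    (∑ i ∈ Finset.range n, p n i = 1) ∧
    (∀ i j, i ≤ j → j < n → p n j ≤ p n i) ∧
    (∀ i, i < n → 0 < p n i)

/-- The quantity `(C·p₁·(∑_{i=2}^n pᵢ²)^{1/2})⁻¹`. -/
noncomputable def coarseBound (p : ℕ → ℕ → ℝ) (n : ℕ) : ℝ :=
  (Cconst n (p n) * p n 0 * Real.sqrt (∑ i ∈ Finset.Ico 1 n, p n i ^ 2))⁻¹

namespace Finset

theorem sum_ite_exists_le {α ι M : Type*} [AddCommMonoid M] [PartialOrder M]
    [IsOrderedAddMonoid M] (s : Finset α) (t : Finset ι) (P : ι → α → Prop)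
    [∀ i, DecidablePred (P i)] [DecidablePred fun a => ∃ i ∈ t, P i a] {f : α → M}
    (hf : ∀ a ∈ s, 0 ≤ f a) :
    ∑ a ∈ s, (if ∃ i ∈ t, P i a then f a else 0) ≤ ∑ i ∈ t, ∑ a ∈ s, if P i a then f a else 0 := by
  rw [Finset.sum_comm]
  refine sum_le_sum fun a ha => ?_
  split_ifs with h
  · obtain ⟨i, hi, hPi⟩ := h
    simpa [hPi] using single_le_sum (f := fun i => if P i a then f a else 0)
      (fun j _ => by split_ifs <;> simp [hf a ha]) hi
  · exact sum_nonneg fun i _ => by split_ifs <;> simp [hf a ha]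

end Finset

namespace Fintype

theorem sum_ite_forall_prod {ι α R : Type*} [Fintype ι] [DecidableEq ι] [Fintype α]
    [CommSemiring R] (P : ι → α → Prop) [∀ i, DecidablePred (P i)] (f : ι → α → R) :
    ∑ x : ι → α, (if ∀ i, P i (x i) then ∏ i, f i (x i) else 0)
      = ∏ i, ∑ a, if P i a then f i a else 0 := by
  simp_rw [Fintype.prod_sum, Fintype.prod_ite_zero]

/-- Events about distinct coordinates of a product measure are independent. -/
theorem sum_ite_forall_comp_prod {ι κ α R : Type*} [Fintype ι] [DecidableEq ι] [Fintype κ]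
    [Fintype α] [CommSemiring R] {g : κ → ι} (hg : g.Injective) (P : κ → α → Prop)
    [∀ t, DecidablePred (P t)] {q : α → R} (hq : ∑ a, q a = 1) :
    ∑ x : ι → α, (if ∀ t, P t (x (g t)) then ∏ i, q (x i) else 0)
      = ∏ t, ∑ a, if P t a then q a else 0 := by
  have hiff : ∀ x : ι → α, (∀ t, P t (x (g t))) ↔ ∀ i, ∀ t, g t = i → P t (x i) :=
    fun x => ⟨fun h i t hti => hti ▸ h t, fun h t => h (g t) t rfl⟩
  calc _ = ∑ x : ι → α, (if ∀ i, ∀ t, g t = i → P t (x i) then ∏ i, q (x i) else 0) :=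
        Fintype.sum_congr _ _ fun x => if_congr (hiff x) rfl rfl
    _ = ∏ i, ∑ a, if ∀ t, g t = i → P t a then q a else 0 :=
        sum_ite_forall_prod (fun i a => ∀ t, g t = i → P t a) fun _ => q
    _ = _ := (prod_of_injective g hg _ _ (fun i hi => ?_) fun t => ?_).symm
  · simpa [show ∀ t, g t ≠ i from fun t hti => hi ⟨t, hti⟩] using hq
  · exact Fintype.sum_congr _ _ fun a =>
      if_congr ⟨fun h s hs => hg hs ▸ h, fun h => h t rfl⟩ rfl rfl

end Fintype

theorem sum_Icc_two_mul_pow_le {u : ℝ} (hu₀ : 0 ≤ u) (hu : u ≤ 1 / 4) (m : ℕ) :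
    ∑ k ∈ Icc 2 m, (k : ℝ) * u ^ k ≤ 8 * u ^ 2 :=
  calc ∑ k ∈ Icc 2 m, (k : ℝ) * u ^ k
      ≤ ∑ k ∈ Ico 2 (m + 1), (2 * u) ^ k := by
        rw [Finset.Ico_add_one_right_eq_Icc]
        refine sum_le_sum fun k _ => ?_
        rw [mul_pow]
        gcongr
        exact_mod_cast Nat.lt_two_pow_self.le
    _ ≤ (2 * u) ^ 2 / (1 - 2 * u) := geom_sum_Ico_le_of_lt_one (by positivity) (by linarith)
    _ ≤ 8 * u ^ 2 := by
        rw [div_le_iff₀ (by linarith)]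
        nlinarith

theorem mul_sq_pow_sub_one_le {T σ a : ℝ} (hσ : 0 ≤ σ) (hσa : σ ≤ a) (hT : T ≤ a ^ 2) {k : ℕ}
    (hk : 2 ≤ k) : T * (σ ^ 2) ^ (k - 1) ≤ (a * σ) ^ k := by
  obtain ⟨j, rfl⟩ : ∃ j, k = j + 2 := ⟨k - 2, by omega⟩
  calc T * (σ ^ 2) ^ (j + 2 - 1) = T * (σ ^ j * σ ^ (j + 2)) := by
        rw [show j + 2 - 1 = j + 1 by omega]
        ring
    _ ≤ a ^ 2 * (a ^ j * σ ^ (j + 2)) :=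
        mul_le_mul hT (by gcongr) (by positivity) (sq_nonneg a)
    _ = (a * σ) ^ (j + 2) := by ring

lemma val_finRotate {k : ℕ} (t : Fin k) :
    (finRotate k t : ℕ) = if (t : ℕ) + 1 = k then 0 else (t : ℕ) + 1 := by
  cases k with
  | zero => exact t.elim0
  | succ k =>
    rw [coe_finRotate]
    simp [Fin.ext_iff]

namespace NonuniformTwoSAT

open Function

abbrev Clause (n : ℕ) := (Fin n × Bool) × (Fin n × Bool)

variable {n m : ℕ}

def Clause.vars (c : Clause n) : Finset (Fin n) := {c.1.1, c.2.1}

lemma Clause.mem_vars {c : Clause n} {x : Fin n} : x ∈ c.vars ↔ x = c.1.1 ∨ x = c.2.1 := by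
  simp [Clause.vars]

lemma Clause.exists_vars_eq_pair {c : Clause n} (hc : c.1.1 ≠ c.2.1) {x : Fin n}
    (hx : x ∈ c.vars) : ∃ w, w ≠ x ∧ c.vars = {x, w} := by
  rcases Clause.mem_vars.1 hx with rfl | rfl
  · exact ⟨c.2.1, hc.symm, rfl⟩
  · exact ⟨c.1.1, hc, pair_comm _ _⟩

def IsClosedWalk (Φ : Fin m → Clause n) {k : ℕ} (g : Fin k → Fin m) (v : Fin k → Fin n) :
    Prop :=
  ∀ t, (Φ (g t)).vars = {v t, v (finRotate k t)}

def HasCycle (Φ : Fin m → Clause n) : Prop :=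
  ∃ k, 2 ≤ k ∧ ∃ (g : Fin k → Fin m) (v : Fin k → Fin n),
    g.Injective ∧ v.Injective ∧ IsClosedWalk Φ g v

/-- `v 0, g 0, v 1, …, g (L - 1), v L` is a path of distinct clauses of `S` through distinct
variables. -/
structure IsPath (Φ : Fin m → Clause n) (S : Finset (Fin m)) (L : ℕ) (g : ℕ → Fin m)
    (v : ℕ → Fin n) : Prop where
  mem : ∀ i < L, g i ∈ S
  injOn_clause : Set.InjOn g (Set.Iio L)
  injOn_var : Set.InjOn v (Set.Iic L)
  vars_eq : ∀ i < L, (Φ (g i)).vars = {v i, v (i + 1)}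

section IsPath

variable {Φ : Fin m → Clause n} {S : Finset (Fin m)} {L : ℕ} {g : ℕ → Fin m} {v : ℕ → Fin n}

lemma IsPath.le (h : IsPath Φ S L g v) : L ≤ m := by
  simpa using Fintype.card_le_of_injective (fun i : Fin L => g i) fun a b hab =>
    Fin.ext (h.injOn_clause a.isLt b.isLt hab)

lemma isPath_one {j : Fin m} (hj : j ∈ S) (hΦ : (Φ j).1.1 ≠ (Φ j).2.1) :
    IsPath Φ S 1 (fun _ => j) (fun i => if i = 0 then (Φ j).1.1 else (Φ j).2.1) where
  mem _ _ := hj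
  injOn_clause i hi i' hi' _ := by
    simp only [Set.mem_Iio] at hi hi'
    omega
  injOn_var i hi i' hi' h := by
    simp only [Set.mem_Iic] at hi hi'
    interval_cases i <;> interval_cases i' <;>
      simp only [one_ne_zero, zero_ne_one, ↓reduceIte] at h ⊢
    · exact hΦ h
    · exact hΦ h.symm
  vars_eq i hi := by
    obtain rfl : i = 0 := by omega
    rfl

lemma IsPath.eq_of_mem_vars (h : IsPath Φ S L g v) {i : ℕ} (hi : i < L)
    (hL : v L ∈ (Φ (g i)).vars) : i + 1 = L := by
  rw [h.vars_eq i hi, mem_insert, mem_singleton] at hL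
  rcases hL with hL | hL
  · exact absurd (h.injOn_var (Set.mem_Iic.2 le_rfl) (Set.mem_Iic.2 hi.le) hL) hi.ne'
  · exact h.injOn_var (Set.mem_Iic.2 hi) (Set.mem_Iic.2 le_rfl) hL.symm

lemma IsPath.snoc (h : IsPath Φ S L g v) {j : Fin m} (hj : j ∈ S) (hfresh : ∀ i < L, g i ≠ j)
    {w : Fin n} (hw : ∀ i ≤ L, v i ≠ w) (hvars : (Φ j).vars = {v L, w}) :
    IsPath Φ S (L + 1) (update g L j) (update v (L + 1) w) where
  mem i hi := by
    rcases eq_or_ne i L with rfl | hne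
    · simpa
    · simpa [hne] using h.mem i (by omega)
  injOn_clause i hi i' hi' hii' := by
    simp only [Set.mem_Iio] at hi hi'
    simp only [update_apply] at hii'
    split_ifs at hii' with h₁ h₂ h₂
    · omega
    · exact absurd hii'.symm (hfresh i' (by omega))
    · exact absurd hii' (hfresh i (by omega))
    · exact h.injOn_clause (Set.mem_Iio.2 (by omega)) (Set.mem_Iio.2 (by omega)) hii'
  injOn_var i hi i' hi' hii' := by
    simp only [Set.mem_Iic] at hi hi'
    simp only [update_apply] at hii'
    split_ifs at hii' with h₁ h₂ h₂
    · omega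
    · exact absurd hii'.symm (hw i' (by omega))
    · exact absurd hii' (hw i (by omega))
    · exact h.injOn_var (Set.mem_Iic.2 (by omega)) (Set.mem_Iic.2 (by omega)) hii'
  vars_eq i hi := by
    rcases eq_or_ne i L with rfl | hne
    · simpa [update_of_ne (show i ≠ i + 1 by omega)] using hvars
    · simpa [hne, update_of_ne (show i ≠ L + 1 by omega),
        update_of_ne (show i + 1 ≠ L + 1 by omega)] using h.vars_eq i (by omega)

lemma IsPath.hasCycle (h : IsPath Φ S L g v) {j : Fin m} (hfresh : ∀ i < L, g i ≠ j) {s : ℕ}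
    (hs : s < L) (hvars : (Φ j).vars = {v L, v s}) : HasCycle Φ := by
  refine ⟨L - s + 1, by omega, fun t => if (t : ℕ) = L - s then j else g (s + t),
    fun t => v (s + t), fun t t' htt' => ?_, fun t t' htt' => ?_, fun t => ?_⟩
  · have ht := t.isLt
    have ht' := t'.isLt
    ext
    dsimp only at htt'
    split_ifs at htt' with h₁ h₂ h₂
    · omega
    · exact absurd htt'.symm (hfresh _ (by omega))
    · exact absurd htt' (hfresh _ (by omega))
    · have := h.injOn_clause (Set.mem_Iio.2 (by omega)) (Set.mem_Iio.2 (by omega)) htt'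
      omega
  · have := h.injOn_var (Set.mem_Iic.2 (by omega)) (Set.mem_Iic.2 (by omega)) htt'
    ext
    omega
  · have ht := t.isLt
    simp only [val_finRotate]
    split_ifs with h₁ h₂ h₂
    · rw [hvars, h₁, Nat.add_sub_cancel' hs.le, add_zero]
    · omega
    · omega
    · rw [h.vars_eq _ (by omega), add_assoc]

end IsPath

/-- Since every variable of a clause of `S` lies in a second clause of `S`, a path can always be
extended or closed into a cycle; without cycles there would be paths longer than `m`. -/
theorem hasCycle_of_forall_mem_vars {Φ : Fin m → Clause n} (hΦ : ∀ j, (Φ j).1.1 ≠ (Φ j).2.1)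
    {S : Finset (Fin m)} (hS : S.Nonempty)
    (hcov : ∀ j ∈ S, ∀ x ∈ (Φ j).vars, ∃ j' ∈ S, j' ≠ j ∧ x ∈ (Φ j').vars) : HasCycle Φ := by
  by_contra hnc
  have hext : ∀ L, 1 ≤ L → (∃ g v, IsPath Φ S L g v) → ∃ g v, IsPath Φ S (L + 1) g v := by
    rintro L hL ⟨g, v, hpath⟩
    have hlast : v L ∈ (Φ (g (L - 1))).vars := by
      simp [hpath.vars_eq (L - 1) (by omega), Nat.sub_add_cancel hL]
    obtain ⟨j, hjS, hjne, hLj⟩ := hcov _ (hpath.mem _ (by omega)) _ hlast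
    have hfresh : ∀ i < L, g i ≠ j := by
      rintro i hi rfl
      obtain rfl : i = L - 1 := by have := hpath.eq_of_mem_vars hi hLj; omega
      exact hjne rfl
    obtain ⟨w, hwL, hvars⟩ := Clause.exists_vars_eq_pair (hΦ j) hLj
    by_cases hw : ∃ s ≤ L, v s = w
    · obtain ⟨s, hsL, rfl⟩ := hw
      have hs : s < L := lt_of_le_of_ne hsL fun hsL => hwL (congrArg v hsL)
      exact absurd (hpath.hasCycle hfresh hs hvars) hnc
    · push Not at hw
      exact ⟨_, _, hpath.snoc hjS hfresh hw hvars⟩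
  have hpaths : ∀ L, 1 ≤ L → ∃ g v, IsPath Φ S L g v := by
    intro L hL
    induction L, hL using Nat.le_induction with
    | base =>
      obtain ⟨j, hj⟩ := hS
      exact ⟨_, _, isPath_one hj (hΦ j)⟩
    | succ L hL ih => exact hext L hL ih
  obtain ⟨g, v, hpath⟩ := hpaths (m + 1) (by omega)
  exact absurd hpath.le (by omega)

theorem card_le_card_biUnion_vars {Φ : Fin m → Clause n} (hΦ : ∀ j, (Φ j).1.1 ≠ (Φ j).2.1)
    (hnc : ¬ HasCycle Φ) (S : Finset (Fin m)) :
    #S ≤ #(S.biUnion fun j => (Φ j).vars) := by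
  induction S using Finset.strongInduction with
  | _ S ih =>
    rcases S.eq_empty_or_nonempty with rfl | hS
    · simp
    by_cases hleaf : ∃ j ∈ S, ∃ x ∈ (Φ j).vars, x ∉ (S.erase j).biUnion fun j' => (Φ j').vars
    · obtain ⟨j, hjS, x, hx, hxS⟩ := hleaf
      calc #S = #(S.erase j) + 1 := (card_erase_add_one hjS).symm
        _ ≤ #((S.erase j).biUnion fun j' => (Φ j').vars) + 1 :=
            Nat.add_le_add_right (ih _ (erase_ssubset hjS)) 1
        _ = #(insert x ((S.erase j).biUnion fun j' => (Φ j').vars)) :=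
            (card_insert_of_notMem hxS).symm
        _ ≤ #(S.biUnion fun j' => (Φ j').vars) := by
            refine card_le_card (insert_subset (mem_biUnion.2 ⟨j, hjS, hx⟩) ?_)
            exact biUnion_subset_biUnion_of_subset_left _ (erase_subset _ _)
    · push Not at hleaf
      refine absurd (hasCycle_of_forall_mem_vars hΦ hS fun j hj x hx => ?_) hnc
      obtain ⟨j', hj', hxj'⟩ := mem_biUnion.1 (hleaf j hj x hx)
      exact ⟨j', mem_of_mem_erase hj', ne_of_mem_erase hj', hxj'⟩

theorem sat2_of_injective {Φ : Fin m → Clause n} {f : Fin m → Fin n} (hf : f.Injective)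
    (hfΦ : ∀ j, f j ∈ (Φ j).vars) : Sat2 Φ := by
  refine ⟨extend f (fun j => if (Φ j).1.1 = f j then (Φ j).1.2 else (Φ j).2.2) fun _ => true,
    fun j => ?_⟩
  rcases Clause.mem_vars.1 (hfΦ j) with h | h
  · left
    rw [← h, hf.extend_apply, if_pos h.symm]
  · by_cases h₁ : (Φ j).1.1 = f j
    · left
      rw [h₁, hf.extend_apply, if_pos h₁]
    · right
      rw [← h, hf.extend_apply, if_neg h₁]

theorem sat2_of_not_hasCycle {Φ : Fin m → Clause n} (hΦ : ∀ j, (Φ j).1.1 ≠ (Φ j).2.1)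
    (hnc : ¬ HasCycle Φ) : Sat2 Φ := by
  obtain ⟨f, hf, hfΦ⟩ := (all_card_le_biUnion_card_iff_exists_injective fun j => (Φ j).vars).1
    (card_le_card_biUnion_vars hΦ hnc)
  exact sat2_of_injective hf hfΦ

structure IsProbVec (n : ℕ) (p : ℕ → ℝ) : Prop where
  two_le : 2 ≤ n
  sum_eq_one : ∑ i ∈ range n, p i = 1
  pos : ∀ i < n, 0 < p i

lemma isProbVec_of_probEnsemble {p : ℕ → ℕ → ℝ} (hp : ProbEnsemble p) (hn : 2 ≤ n) :
    IsProbVec n (p n) :=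
  have ⟨hsum, _, hpos⟩ := hp n (by omega)
  ⟨hn, hsum, hpos⟩

section

variable {p : ℕ → ℝ}

lemma ne_of_clauseProb2_ne_zero {c : Clause n} (hc : clauseProb2 n p c ≠ 0) : c.1.1 ≠ c.2.1 :=
  fun h => hc (if_neg (not_not.2 h))

noncomputable def probEvent (n m : ℕ) (p : ℕ → ℝ) (E : (Fin m → Clause n) → Prop) : ℝ :=
  ∑ Φ, if E Φ then formulaProb2 n m p Φ else 0

lemma probUnsat2_eq_probEvent (n m : ℕ) (p : ℕ → ℝ) :
    probUnsat2 n m p = probEvent n m p fun Φ => ¬ Sat2 Φ := by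
  unfold probUnsat2 probEvent
  -- not `rfl`: the two sides decide `¬ Sat2 Φ` through different instances
  congr!

lemma sum_fin_ite_ne_zero (f : ℕ → ℝ) :
    ∑ i : Fin n, (if (i : ℕ) ≠ 0 then f i else 0) = ∑ i ∈ Ico 1 n, f i := by
  rw [Fin.sum_univ_eq_sum_range (fun i => if i ≠ 0 then f i else 0), ← sum_filter]
  congr 1
  ext i
  simp only [mem_filter, mem_range, mem_Ico]
  omega

/-- An injective `v` takes the value `0` at most once, so its weight is at most that of a tuple
avoiding `0` outside one chosen position `t₀`. -/
theorem sum_injective_prod_sq_le {k : ℕ} (hk : 1 ≤ k) :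
    ∑ v ∈ univ.filter (Injective : (Fin k → Fin n) → Prop), ∏ t, p (v t) ^ 2
      ≤ k * ((∑ i ∈ range n, p i ^ 2) * (∑ i ∈ Ico 1 n, p i ^ 2) ^ (k - 1)) := by
  have hcover : ∀ v : Fin k → Fin n, v.Injective → ∃ t₀ ∈ univ, ∀ t, t = t₀ ∨ (v t : ℕ) ≠ 0 := by
    intro v hv
    by_cases h0 : ∃ t₀, (v t₀ : ℕ) = 0
    · obtain ⟨t₀, ht₀⟩ := h0
      exact ⟨t₀, mem_univ _, fun t => or_iff_not_imp_right.2 fun ht =>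
        hv (Fin.ext ((not_not.1 ht).trans ht₀.symm))⟩
    · exact ⟨⟨0, hk⟩, mem_univ _, fun t => Or.inr fun ht => h0 ⟨t, ht⟩⟩
  have hfactor : ∀ t t₀ : Fin k, ∑ i : Fin n, (if t = t₀ ∨ (i : ℕ) ≠ 0 then p i ^ 2 else 0)
      = if t = t₀ then ∑ i ∈ range n, p i ^ 2 else ∑ i ∈ Ico 1 n, p i ^ 2 := by
    intro t t₀
    by_cases ht : t = t₀
    · simp [ht, Fin.sum_univ_eq_sum_range (fun i => p i ^ 2)]
    · simpa only [ht, false_or, if_false] using sum_fin_ite_ne_zero fun i => p i ^ 2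
  calc _ ≤ ∑ v : Fin k → Fin n, if ∃ t₀ ∈ univ, ∀ t, t = t₀ ∨ (v t : ℕ) ≠ 0
          then ∏ t, p (v t) ^ 2 else 0 := by
        rw [sum_filter]
        refine sum_le_sum fun v _ => ?_
        split_ifs with hv hcov
        exacts [le_rfl, absurd (hcover v hv) hcov, by positivity, le_rfl]
    _ ≤ ∑ t₀ : Fin k, ∑ v : Fin k → Fin n, if ∀ t, t = t₀ ∨ (v t : ℕ) ≠ 0
          then ∏ t, p (v t) ^ 2 else 0 :=
        sum_ite_exists_le univ univ (fun t₀ (v : Fin k → Fin n) => ∀ t, t = t₀ ∨ (v t : ℕ) ≠ 0)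
          fun _ _ => by positivity
    _ = ∑ t₀ : Fin k, ∏ t, ∑ i : Fin n, (if t = t₀ ∨ (i : ℕ) ≠ 0 then p i ^ 2 else 0) :=
        sum_congr rfl fun t₀ _ => by
          rw [← Fintype.sum_ite_forall_prod]
          congr!
    _ = _ := by
        simp only [hfactor, prod_ite, filter_eq', filter_ne', mem_univ, if_true, prod_const,
          card_singleton, pow_one, card_erase_of_mem, card_univ, Fintype.card_fin, sum_const,
          nsmul_eq_mul]

namespace IsProbVec

lemma sum_sq_lt_one (h : IsProbVec n p) : ∑ i ∈ range n, p i ^ 2 < 1 := by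
  have hnonneg : ∀ i ∈ range n, 0 ≤ p i := fun i hi => (h.pos i (mem_range.1 hi)).le
  have hle : ∀ i ∈ range n, p i ≤ 1 := fun i hi => h.sum_eq_one ▸ single_le_sum hnonneg hi
  have hp₀ : p 0 < 1 :=
    calc p 0 < ∑ i ∈ range 2, p i := by simp [sum_range_succ, h.pos 1 h.two_le]
      _ ≤ 1 := h.sum_eq_one ▸ sum_le_sum_of_subset_of_nonneg (range_subset_range.2 h.two_le)
          fun i hi _ => hnonneg i hi
  calc ∑ i ∈ range n, p i ^ 2 < ∑ i ∈ range n, p i :=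
        sum_lt_sum (fun i hi => pow_le_of_le_one (hnonneg i hi) (hle i hi) two_ne_zero)
          ⟨0, mem_range.2 (by linarith [h.two_le]), by
            nlinarith [h.pos 0 (by linarith [h.two_le])]⟩
    _ = 1 := h.sum_eq_one

lemma cconst_pos (h : IsProbVec n p) : 0 < Cconst n p :=
  inv_pos.2 (sub_pos.2 h.sum_sq_lt_one)

lemma clauseProb2_nonneg (h : IsProbVec n p) (c : Clause n) : 0 ≤ clauseProb2 n p c := by
  unfold clauseProb2
  split_ifs
  · have := h.cconst_pos
    have := h.pos _ c.1.1.isLt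
    have := h.pos _ c.2.1.isLt
    unfold Cconst at *
    positivity
  · rfl

lemma sum_clauseProb2 (h : IsProbVec n p) : ∑ c : Clause n, clauseProb2 n p c = 1 := by
  set A := (1 - ∑ i ∈ range n, p i ^ 2)⁻¹ / 4 with hA
  have hsum : ∑ i : Fin n, p i = 1 := (Fin.sum_univ_eq_sum_range p n).trans h.sum_eq_one
  have hrow : ∀ i : Fin n, ∑ j : Fin n, (if i ≠ j then A * p i * p j else 0)
      = A * p i - A * p i ^ 2 := by
    intro i
    have hoff : ∀ j : Fin n, (if i ≠ j then A * p i * p j else 0)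
        = A * p i * p j - if i = j then A * p i ^ 2 else 0 := by
      intro j
      by_cases hij : i = j
      · simp only [hij, ne_eq, not_true_eq_false, ↓reduceIte]
        ring
      · simp [hij]
    simp only [hoff, sum_sub_distrib, sum_ite_eq, mem_univ, if_true, ← mul_sum, hsum, mul_one]
  simp only [clauseProb2, ← hA, Fintype.sum_prod_type, Fintype.sum_bool, ← two_mul, ← mul_sum,
    hrow]
  calc _ = 4 * A * (1 - ∑ i : Fin n, p i ^ 2) := by
        simp only [mul_sub, mul_sum, ← hsum, ← sum_sub_distrib]
        exact sum_congr rfl fun i _ => by ring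
    _ = 1 := by
        rw [Fin.sum_univ_eq_sum_range (fun i => p i ^ 2), hA]
        field_simp [(sub_pos.2 h.sum_sq_lt_one).ne']

lemma formulaProb2_nonneg (h : IsProbVec n p) (Φ : Fin m → Clause n) :
    0 ≤ formulaProb2 n m p Φ :=
  prod_nonneg fun _ _ => h.clauseProb2_nonneg _

lemma sum_formulaProb2 (h : IsProbVec n p) : ∑ Φ : Fin m → Clause n, formulaProb2 n m p Φ = 1 := by
  simp [formulaProb2, ← Fintype.prod_sum, h.sum_clauseProb2]

lemma probUnsat2_nonneg (h : IsProbVec n p) : 0 ≤ probUnsat2 n m p :=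
  sum_nonneg fun Φ _ => by split_ifs <;> simp [h.formulaProb2_nonneg Φ]

lemma probEvent_mono (h : IsProbVec n p) {E E' : (Fin m → Clause n) → Prop}
    (hE : ∀ Φ, formulaProb2 n m p Φ ≠ 0 → E Φ → E' Φ) : probEvent n m p E ≤ probEvent n m p E' :=
  sum_le_sum fun Φ _ => by
    by_cases hΦ : formulaProb2 n m p Φ = 0
    · simp [hΦ]
    · split_ifs with h₁ h₂
      exacts [le_rfl, absurd (hE Φ hΦ h₁) h₂, h.formulaProb2_nonneg Φ, le_rfl]

lemma probEvent_exists_le (h : IsProbVec n p) {ι : Type*} (s : Finset ι)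
    (E : ι → (Fin m → Clause n) → Prop) :
    probEvent n m p (fun Φ => ∃ i ∈ s, E i Φ) ≤ ∑ i ∈ s, probEvent n m p (E i) := by
  unfold probEvent
  refine le_trans (le_of_eq ?_) (sum_ite_exists_le univ s E fun Φ _ => h.formulaProb2_nonneg Φ)
  congr! 3

lemma probSat2_eq_one_sub (h : IsProbVec n p) : probSat2 n m p = 1 - probUnsat2 n m p := by
  rw [eq_sub_iff_add_eq, ← h.sum_formulaProb2, probSat2, probUnsat2, ← sum_add_distrib]
  exact sum_congr rfl fun Φ _ => by split_ifs <;> simp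

lemma clauseProb2_le_of_vars_eq (h : IsProbVec n p) {c : Clause n} {a b : Fin n}
    (hc : c.vars = {a, b}) : clauseProb2 n p c ≤ Cconst n p / 4 * (p a * p b) := by
  have hpair : c.1.1 = a ∧ c.2.1 = b ∨ c.1.1 = b ∧ c.2.1 = a :=
    Set.pair_eq_pair_iff.1 (by
      simpa [Clause.vars] using congrArg (fun s : Finset (Fin n) => (s : Set (Fin n))) hc)
  unfold clauseProb2
  split_ifs
  · rcases hpair with ⟨h₁, h₂⟩ | ⟨h₁, h₂⟩ <;> rw [h₁, h₂, Cconst] <;> apply le_of_eq <;> ring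
  · have := h.cconst_pos
    have := h.pos _ a.isLt
    have := h.pos _ b.isLt
    positivity

lemma sum_clauseProb2_vars_eq_le (h : IsProbVec n p) (a b : Fin n) :
    ∑ c : Clause n, (if c.vars = {a, b} then clauseProb2 n p c else 0)
      ≤ 4 * Cconst n p * (p a * p b) := by
  set D : Finset (Clause n) := ({a, b} ×ˢ univ) ×ˢ ({a, b} ×ˢ univ)
  have hD : ∀ c : Clause n, c.vars = {a, b} → c ∈ D := by
    intro c hc
    have h₁ : c.1.1 ∈ ({a, b} : Finset (Fin n)) := hc ▸ Clause.mem_vars.2 (Or.inl rfl)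
    have h₂ : c.2.1 ∈ ({a, b} : Finset (Fin n)) := hc ▸ Clause.mem_vars.2 (Or.inr rfl)
    simp [D, h₁, h₂]
  have hcard : #D ≤ 16 := by
    simp only [D, card_product, card_univ, Fintype.card_bool]
    nlinarith [card_le_two (a := a) (b := b)]
  have hpos : 0 ≤ Cconst n p / 4 * (p a * p b) := by
    have := h.cconst_pos
    have := h.pos _ a.isLt
    have := h.pos _ b.isLt
    positivity
  calc _ ≤ ∑ c : Clause n, if c ∈ D then Cconst n p / 4 * (p a * p b) else 0 := by
        refine sum_le_sum fun c _ => ?_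
        split_ifs with hc hcD
        exacts [h.clauseProb2_le_of_vars_eq hc, absurd (hD c hc) hcD, hpos, le_rfl]
    _ = #D * (Cconst n p / 4 * (p a * p b)) := by
        rw [sum_ite_mem, univ_inter, sum_const, nsmul_eq_mul]
    _ ≤ 16 * (Cconst n p / 4 * (p a * p b)) := by gcongr; exact_mod_cast hcard
    _ = 4 * Cconst n p * (p a * p b) := by ring

theorem probEvent_isClosedWalk_le (h : IsProbVec n p) {k : ℕ} {g : Fin k → Fin m}
    (hg : g.Injective) (v : Fin k → Fin n) :
    probEvent n m p (fun Φ => IsClosedWalk Φ g v) ≤ (4 * Cconst n p) ^ k * ∏ t, p (v t) ^ 2 :=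
  calc _ = ∏ t, ∑ c : Clause n,
        (if c.vars = {v t, v (finRotate k t)} then clauseProb2 n p c else 0) := by
        unfold probEvent IsClosedWalk formulaProb2
        rw [← Fintype.sum_ite_forall_comp_prod hg _ h.sum_clauseProb2]
        congr!
    _ ≤ ∏ t, 4 * Cconst n p * (p (v t) * p (v (finRotate k t))) :=
        prod_le_prod (fun t _ => sum_nonneg fun c _ => by
          split_ifs <;> simp [h.clauseProb2_nonneg c]) fun t _ => h.sum_clauseProb2_vars_eq_le _ _
    _ = _ := by
        rw [prod_mul_distrib, prod_const, card_univ, Fintype.card_fin, mul_pow, prod_mul_distrib,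
          Equiv.prod_comp (finRotate k) (fun t => p (v t)), ← prod_mul_distrib]
        simp [sq]

/-- The `k`-th summand bounds the expected number of cycles of length `k`. -/
theorem probUnsat2_le (h : IsProbVec n p) (m : ℕ) :
    probUnsat2 n m p ≤ ∑ k ∈ Icc 2 m, (m : ℝ) ^ k * ((4 * Cconst n p) ^ k *
      (k * ((∑ i ∈ range n, p i ^ 2) * (∑ i ∈ Ico 1 n, p i ^ 2) ^ (k - 1)))) := by
  have hcycle : probUnsat2 n m p ≤ probEvent n m p fun Φ => ∃ k ∈ Icc 2 m,
      ∃ g ∈ univ.filter (Injective : (Fin k → Fin m) → Prop),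
      ∃ v ∈ univ.filter (Injective : (Fin k → Fin n) → Prop), IsClosedWalk Φ g v := by
    refine (probUnsat2_eq_probEvent n m p).trans_le (h.probEvent_mono fun Φ hΦ hunsat => ?_)
    have hproper : ∀ j, (Φ j).1.1 ≠ (Φ j).2.1 := fun j =>
      ne_of_clauseProb2_ne_zero (prod_ne_zero_iff.1 hΦ j (mem_univ j))
    obtain ⟨k, hk, g, v, hg, hv, hwalk⟩ := not_not.1 (mt (sat2_of_not_hasCycle hproper) hunsat)
    have hkm : k ≤ m := by simpa using Fintype.card_le_of_injective g hg
    exact ⟨k, mem_Icc.2 ⟨hk, hkm⟩, g, by simpa using hg, v, by simpa using hv, hwalk⟩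
  refine hcycle.trans ((h.probEvent_exists_le _ _).trans (sum_le_sum fun k hk => ?_))
  have hk : 1 ≤ k := by linarith [(mem_Icc.1 hk).1]
  calc _ ≤ ∑ g ∈ univ.filter (Injective : (Fin k → Fin m) → Prop),
          ∑ v ∈ univ.filter (Injective : (Fin k → Fin n) → Prop),
            probEvent n m p fun Φ => IsClosedWalk Φ g v :=
        (h.probEvent_exists_le _ _).trans (sum_le_sum fun g _ => h.probEvent_exists_le _ _)
    _ ≤ ∑ g ∈ univ.filter (Injective : (Fin k → Fin m) → Prop),
          ∑ v ∈ univ.filter (Injective : (Fin k → Fin n) → Prop),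
            (4 * Cconst n p) ^ k * ∏ t, p (v t) ^ 2 :=
        sum_le_sum fun g hg => sum_le_sum fun v _ =>
          h.probEvent_isClosedWalk_le (mem_filter.1 hg).2 v
    _ ≤ ∑ _g : Fin k → Fin m, (4 * Cconst n p) ^ k *
          (k * ((∑ i ∈ range n, p i ^ 2) * (∑ i ∈ Ico 1 n, p i ^ 2) ^ (k - 1))) := by
        have := h.cconst_pos
        refine sum_le_sum_of_subset_of_nonneg (subset_univ _) (fun _ _ _ => by positivity)
          |>.trans' (sum_le_sum fun g _ => ?_)
        rw [← mul_sum]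
        gcongr
        exact sum_injective_prod_sq_le hk
    _ = _ := by simp

theorem probUnsat2_le_of_sum_sq_le (h : IsProbVec n p) {a : ℝ} (ha : 0 ≤ a)
    (hT : ∑ i ∈ range n, p i ^ 2 ≤ a ^ 2)
    (hu : 4 * a * m * Cconst n p * √(∑ i ∈ Ico 1 n, p i ^ 2) ≤ 1 / 4) :
    probUnsat2 n m p ≤ 8 * (4 * a * m * Cconst n p * √(∑ i ∈ Ico 1 n, p i ^ 2)) ^ 2 := by
  set S := ∑ i ∈ Ico 1 n, p i ^ 2
  have hS : 0 ≤ S := sum_nonneg fun _ _ => sq_nonneg _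
  have hST : S ≤ ∑ i ∈ range n, p i ^ 2 :=
    sum_le_sum_of_subset_of_nonneg (fun i hi => mem_range.2 (mem_Ico.1 hi).2)
      fun _ _ _ => sq_nonneg _
  have hσa : √S ≤ a := Real.sqrt_le_iff.2 ⟨ha, hST.trans hT⟩
  have hC := h.cconst_pos
  calc probUnsat2 n m p ≤ _ := h.probUnsat2_le m
    _ ≤ ∑ k ∈ Icc 2 m, (k : ℝ) * (4 * a * m * Cconst n p * √S) ^ k := by
        refine sum_le_sum fun k hk => ?_
        have hcycle := mul_sq_pow_sub_one_le (Real.sqrt_nonneg S) hσa hT (mem_Icc.1 hk).1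
        rw [Real.sq_sqrt hS] at hcycle
        calc (m : ℝ) ^ k * ((4 * Cconst n p) ^ k * (k * ((∑ i ∈ range n, p i ^ 2) * S ^ (k - 1))))
            ≤ (m : ℝ) ^ k * ((4 * Cconst n p) ^ k * (k * (a * √S) ^ k)) := by gcongr
          _ = _ := by ring
    _ ≤ _ := sum_Icc_two_mul_pow_le (by positivity) hu m

end IsProbVec

end

variable {p : ℕ → ℕ → ℝ}

lemma coarseBound_pos (h : IsProbVec n (p n)) : 0 < coarseBound p n := by
  have hS : 0 < ∑ i ∈ Ico 1 n, p n i ^ 2 :=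
    sum_pos' (fun _ _ => sq_nonneg _)
      ⟨1, mem_Ico.2 ⟨le_rfl, h.two_le⟩, pow_pos (h.pos 1 h.two_le) 2⟩
  have := h.cconst_pos
  have := h.pos 0 (by linarith [h.two_le])
  have := Real.sqrt_pos.2 hS
  unfold coarseBound
  positivity

theorem eventually_probUnsat2_le (hp : ProbEnsemble p)
    (hO : (fun n => ∑ i ∈ range n, p n i ^ 2) =O[atTop] fun n => p n 0 ^ 2) :
    ∃ L, 1 ≤ L ∧ ∀ᶠ n in atTop, ∀ m : ℕ, L * (m * (coarseBound p n)⁻¹) ≤ 1 / 4 →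
      probUnsat2 n m (p n) ≤ 8 * (L * (m * (coarseBound p n)⁻¹)) ^ 2 := by
  obtain ⟨c, hc⟩ := hO.bound
  set K := max c 1
  have hK : 1 ≤ √K := Real.one_le_sqrt.2 (le_max_right _ _)
  refine ⟨4 * √K, by linarith, ?_⟩
  filter_upwards [hc, eventually_ge_atTop 2] with n hn h2 m
  have h := isProbVec_of_probEnsemble hp h2
  have hT : ∑ i ∈ range n, p n i ^ 2 ≤ (√K * p n 0) ^ 2 := by
    rw [mul_pow, Real.sq_sqrt (by positivity)]
    rw [Real.norm_of_nonneg (sum_nonneg fun _ _ => sq_nonneg _),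
      Real.norm_of_nonneg (sq_nonneg _)] at hn
    exact hn.trans (mul_le_mul_of_nonneg_right (le_max_left _ _) (sq_nonneg _))
  have hrate : 4 * √K * (m * (coarseBound p n)⁻¹)
      = 4 * (√K * p n 0) * m * Cconst n (p n) * √(∑ i ∈ Ico 1 n, p n i ^ 2) := by
    rw [coarseBound, inv_inv]
    ring
  rw [hrate]
  exact h.probUnsat2_le_of_sum_sq_le (mul_nonneg (by positivity) (h.pos 0 (by omega)).le) hT

theorem tendsto_probSat2_of_isLittleO (hp : ProbEnsemble p)
    (hO : (fun n => ∑ i ∈ range n, p n i ^ 2) =O[atTop] fun n => p n 0 ^ 2) {m : ℕ → ℕ}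
    (hm : (fun n => (m n : ℝ)) =o[atTop] fun n => coarseBound p n) :
    Tendsto (fun n => probSat2 n (m n) (p n)) atTop (nhds 1) := by
  obtain ⟨L, -, hL⟩ := eventually_probUnsat2_le hp hO
  have hx : Tendsto (fun n => L * (m n * (coarseBound p n)⁻¹)) atTop (nhds 0) := by
    simpa [div_eq_mul_inv] using hm.tendsto_div_nhds_zero.const_mul L
  have hunsat : Tendsto (fun n => probUnsat2 n (m n) (p n)) atTop (nhds 0) := by
    refine squeeze_zero' ?_ ?_ (by simpa using (hx.pow 2).const_mul 8)
    · filter_upwards [eventually_ge_atTop 2] with n h2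
      exact (isProbVec_of_probEnsemble hp h2).probUnsat2_nonneg
    · filter_upwards [hL, hx.eventually (ge_mem_nhds (by norm_num : (0 : ℝ) < 1 / 4))]
        with n hn hsmall using hn _ hsmall
  have hsat : Tendsto (fun n => 1 - probUnsat2 n (m n) (p n)) atTop (nhds 1) := by
    simpa using hunsat.const_sub 1
  refine hsat.congr' ?_
  filter_upwards [eventually_ge_atTop 2] with n h2
  exact (isProbVec_of_probEnsemble hp h2).probSat2_eq_one_sub.symm

theorem exists_eventually_half_le_probSat2 (hp : ProbEnsemble p)
    (hO : (fun n => ∑ i ∈ range n, p n i ^ 2) =O[atTop] fun n => p n 0 ^ 2) :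
    ∃ ε : ℝ, 0 < ε ∧ ε < 1 ∧ ∀ m : ℕ → ℕ,
      (∀ᶠ n in atTop, (m n : ℝ) ≤ (1 - ε) * coarseBound p n) →
      ∀ᶠ n in atTop, 1 / 2 ≤ probSat2 n (m n) (p n) := by
  obtain ⟨L, hL₁, hL⟩ := eventually_probUnsat2_le hp hO
  refine ⟨1 - 1 / (4 * L), ?_, sub_lt_self _ (by positivity), fun m hm => ?_⟩
  · rw [sub_pos, div_lt_one (by positivity)]
    linarith
  filter_upwards [hm, hL, eventually_ge_atTop 2] with n hmn hLn h2
  have h := isProbVec_of_probEnsemble hp h2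
  have hB := coarseBound_pos h
  rw [sub_sub_cancel] at hmn
  have hx : L * (m n * (coarseBound p n)⁻¹) ≤ 1 / 4 :=
    calc L * (m n * (coarseBound p n)⁻¹)
        ≤ L * (1 / (4 * L) * coarseBound p n * (coarseBound p n)⁻¹) := by gcongr
      _ = 1 / 4 := by field_simp
  have hx₀ : 0 ≤ L * (m n * (coarseBound p n)⁻¹) := by positivity
  rw [h.probSat2_eq_one_sub]
  nlinarith [hLn _ hx]

end NonuniformTwoSAT

theorem nonuniform_2SAT_bicycle_coarse_general
    (p : ℕ → ℕ → ℝ) (hp : ProbEnsemble p)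
    (hΘ : (fun n => p n 0 ^ 2) =Θ[atTop] fun n => ∑ i ∈ Finset.range n, p n i ^ 2) :
    (∀ m : ℕ → ℕ,
      (fun n => (m n : ℝ)) =o[atTop] (fun n => coarseBound p n) →
      Tendsto (fun n => probSat2 n (m n) (p n)) atTop (nhds 1)) ∧
    (∃ ε : ℝ, 0 < ε ∧ ε < 1 ∧ ∀ m : ℕ → ℕ,
      (∀ᶠ n in atTop, (m n : ℝ) ≤ (1 - ε) * coarseBound p n) →
      ∃ δ : ℝ, 0 < δ ∧ ∀ᶠ n in atTop, δ ≤ probSat2 n (m n) (p n)) := by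
  obtain ⟨ε, hε₀, hε₁, hε⟩ := NonuniformTwoSAT.exists_eventually_half_le_probSat2 hp hΘ.2
  exact ⟨fun m hm => NonuniformTwoSAT.tendsto_probSat2_of_isLittleO hp hΘ.2 hm,
    ε, hε₀, hε₁, fun m hm => ⟨1 / 2, one_half_pos, hε m hm⟩⟩

/-- If `p₁² = Θ(∑ pᵢ²)` and `q_max = o(1)`, then: (i) for `m = o((C·p₁·(∑_{i=2}^n pᵢ²)^{1/2})⁻¹)`
the random formula is satisfiable whp, and (ii) there is a constant `ε ∈ (0,1)` such that for
`m ≤ (1-ε)·(C·p₁·(∑_{i=2}^n pᵢ²)^{1/2})⁻¹` it is satisfiable with positive constant probability. -/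
theorem nonuniform_2SAT_bicycle_coarse
    (p : ℕ → ℕ → ℝ) (hp : ProbEnsemble p)
    (hΘ : (fun n => p n 0 ^ 2) =Θ[atTop] fun n => ∑ i ∈ Finset.range n, p n i ^ 2)
    (hq : Tendsto (fun n => qmax2 n (p n)) atTop (nhds 0)) :
    (∀ m : ℕ → ℕ,
      (fun n => (m n : ℝ)) =o[atTop] (fun n => coarseBound p n) →
      Tendsto (fun n => probSat2 n (m n) (p n)) atTop (nhds 1)) ∧
    (∃ ε : ℝ, 0 < ε ∧ ε < 1 ∧ ∀ m : ℕ → ℕ,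
      (∀ᶠ n in atTop, (m n : ℝ) ≤ (1 - ε) * coarseBound p n) →
      ∃ δ : ℝ, 0 < δ ∧ ∀ᶠ n in atTop, δ ≤ probSat2 n (m n) (p n)) :=
  nonuniform_2SAT_bicycle_coarse_general p hp hΘ
end

section
/- Let Φ be a non-uniform random 2-SAT formula on n variables with probability vector p satisfying p₁² = Θ(Σ_{i=1}^n pᵢ²) and p₂² = o(Σ_{i=2}^n pᵢ²). If m = ω((C·p₁·(Σ_{i=2}^n pᵢ²)^{1/2})^{-1}), then Φ is unsatisfiable with probability 1 − o(1). -/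
/-!
Put `x₀ := 0`. The clauses `(x₀, s) ∨ (i, true)` and `(x₀, s) ∨ (i, false)` force `a x₀ = s` in
every satisfying assignment `a`, so a satisfiable formula contains no such pair of clauses for
`s = true` or for `s = false`. For fixed `s`, the number `N` of (ordered) pairs of draws forming such
a pair has mean `T = m (m - 1) X² / 4`, where `X = C p₀ (∑_{i ≥ 1} pᵢ²)^{1/2}`. Pairs sharing no
draw are independent, and a pair sharing a draw with a given one is compatible with it for at most
`2 m` choices, each costing a factor `≤ X / 2`; hence `E N² ≤ T² + T (1 + m X)`. The second moment
method `P(N = 0) ≤ (E N² - T²) / T²` then gives `P(sat) ≤ 16 (1 + m X) / (m X)²`, which tends to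
`0` because `m X → ∞` is exactly the hypothesis on `m`.
-/

open Finset Filter Asymptotics

open scoped Classical

open Function Fintype

section SeqProb

variable {K : Type*} {m : ℕ} {w : K → ℝ}

noncomputable def seqProb (w : K → ℝ) (S : Finset (Fin m → K)) : ℝ :=
  ∑ Φ ∈ S, ∏ j, w (Φ j)

lemma seqProb_nonneg (hw : ∀ c, 0 ≤ w c) (S : Finset (Fin m → K)) : 0 ≤ seqProb w S :=
  sum_nonneg fun _ _ => prod_nonneg fun _ _ => hw _

lemma seqProb_mono (hw : ∀ c, 0 ≤ w c) {S S' : Finset (Fin m → K)} (h : S ⊆ S') :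
    seqProb w S ≤ seqProb w S' :=
  sum_le_sum_of_subset_of_nonneg h fun _ _ _ => prod_nonneg fun _ _ => hw _

lemma seqProb_union_le [DecidableEq K] (hw : ∀ c, 0 ≤ w c) (S S' : Finset (Fin m → K)) :
    seqProb w (S ∪ S') ≤ seqProb w S + seqProb w S' := by
  rw [seqProb, seqProb, seqProb, ← sum_union_inter]
  exact le_add_of_nonneg_right (seqProb_nonneg hw _)

lemma seqProb_piFinset (E : Fin m → Finset K) :
    seqProb w (piFinset E) = ∏ j, ∑ c ∈ E j, w c :=
  (prod_univ_sum E fun _ c => w c).symm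

variable [Fintype K]

def cylinder (j : Fin m) (A : Finset K) : Fin m → Finset K :=
  fun c => if c = j then A else univ

lemma seqProb_compl [DecidableEq K] (hw : ∑ c, w c = 1) (S : Finset (Fin m → K)) :
    seqProb w Sᶜ = 1 - seqProb w S := by
  have huniv : seqProb w (univ : Finset (Fin m → K)) = 1 := by
    rw [← piFinset_univ, seqProb_piFinset]
    simp [hw]
  rw [← huniv, seqProb, seqProb, seqProb, ← sum_compl_add_sum S]
  ring

/-- Independence of draws: boxes that constrain disjoint sets of coordinates. -/
lemma seqProb_piFinset_inter [DecidableEq K] (hw : ∑ c, w c = 1) {E F : Fin m → Finset K}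
    (h : ∀ j, E j = univ ∨ F j = univ) :
    seqProb w (piFinset E ∩ piFinset F) = seqProb w (piFinset E) * seqProb w (piFinset F) := by
  rw [← piFinset_inter, seqProb_piFinset, seqProb_piFinset, seqProb_piFinset,
    ← prod_mul_distrib]
  refine prod_congr rfl fun j _ => ?_
  rcases h j with h | h <;> simp [h, hw]

lemma seqProb_cylinder (hw : ∑ c, w c = 1) (j : Fin m) (A : Finset K) :
    seqProb w (piFinset (cylinder j A)) = ∑ c ∈ A, w c := by
  rw [seqProb_piFinset, Fintype.prod_eq_single j fun c hc => by simp [cylinder, hc, hw]]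
  simp [cylinder]

end SeqProb

/-- The second moment method: Cauchy–Schwarz for the number of events `S z` that occur. -/
theorem sq_sum_le_sum_biUnion_mul {Ω ι : Type*} [DecidableEq Ω] {W : Ω → ℝ} (hW : ∀ ω, 0 ≤ W ω)
    (Z : Finset ι) (S : ι → Finset Ω) :
    (∑ z ∈ Z, ∑ ω ∈ S z, W ω) ^ 2 ≤
      (∑ ω ∈ Z.biUnion S, W ω) * ∑ z ∈ Z, ∑ z' ∈ Z, ∑ ω ∈ S z ∩ S z', W ω := by
  set U := Z.biUnion S
  let N : Ω → ℝ := fun ω => ∑ z ∈ Z, if ω ∈ S z then 1 else 0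
  have restrict : ∀ z ∈ Z, ∀ T : Finset Ω,
      ∑ ω ∈ S z ∩ T, W ω = ∑ ω ∈ U, if ω ∈ S z ∩ T then W ω else 0 := fun z hz T => by
    rw [← sum_filter, filter_mem_eq_inter, inter_eq_right.2
      (inter_subset_left.trans (subset_biUnion_of_mem S hz))]
  have first : ∑ z ∈ Z, ∑ ω ∈ S z, W ω = ∑ ω ∈ U, W ω * N ω := by
    simp_rw [N, mul_sum, mul_ite, mul_one, mul_zero]
    rw [sum_comm]
    refine sum_congr rfl fun z hz => ?_
    simpa using restrict z hz (S z)
  have second : ∑ z ∈ Z, ∑ z' ∈ Z, ∑ ω ∈ S z ∩ S z', W ω = ∑ ω ∈ U, W ω * N ω ^ 2 := by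
    simp_rw [N, sq, Finset.sum_mul_sum, mul_sum, ite_mul, one_mul, zero_mul, mul_ite, mul_one,
      mul_zero]
    symm
    rw [sum_comm]
    refine sum_congr rfl fun z hz => ?_
    rw [sum_comm]
    symm
    refine sum_congr rfl fun z' _ => ?_
    rw [restrict z hz (S z')]
    refine sum_congr rfl fun ω _ => ?_
    by_cases h : ω ∈ S z <;> by_cases h' : ω ∈ S z' <;> simp [h, h']
  rw [first, second]
  exact sum_sq_le_sum_mul_sum_of_sq_le_mul U (fun ω _ => hW ω)
    (fun ω _ => mul_nonneg (hW ω) (sq_nonneg _)) fun ω _ => by ring_nf; rfl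

lemma one_sub_le_div_of_sq_le_mul {a T D r : ℝ} (ha : a ≤ 1) (hT : 0 < T) (hD₀ : 0 ≤ D)
    (hsq : T ^ 2 ≤ a * D) (hD : D ≤ T * (T + r)) : 1 - a ≤ r / T := by
  have hTD : T ^ 2 ≤ D := hsq.trans (mul_le_of_le_one_left hD₀ ha)
  rw [le_div_iff₀ hT]
  nlinarith [mul_le_mul_of_nonneg_left hTD (sub_nonneg.2 ha)]

section PairEvents

variable {K ι : Type*} {m : ℕ} {w : K → ℝ} {L : ι × Bool → Finset K}

lemma eq_of_mem_of_pairwise_disjoint (hL : Pairwise (Disjoint on L)) {c : K} {x y : ι × Bool}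
    (hx : c ∈ L x) (hy : c ∈ L y) : x = y :=
  by_contra fun h => disjoint_left.1 (hL h) hx hy

variable [Fintype K]

noncomputable def pairFree (L : ι × Bool → Finset K) : Finset (Fin m → K) :=
  {Φ | ∀ i j j', Φ j ∈ L (i, true) → Φ j' ∉ L (i, false)}

lemma mem_pairFree {Φ : Fin m → K} :
    Φ ∈ pairFree L ↔ ∀ i j j', Φ j ∈ L (i, true) → Φ j' ∉ L (i, false) := by
  simp [pairFree]

variable [DecidableEq K]

noncomputable def pairBox (L : ι × Bool → Finset K) (z : (Fin m × Fin m) × ι) : Fin m → Finset K :=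
  fun c => cylinder z.1.1 (L (z.2, true)) c ∩ cylinder z.1.2 (L (z.2, false)) c

lemma mem_piFinset_pairBox {z : (Fin m × Fin m) × ι} {Φ : Fin m → K} :
    Φ ∈ piFinset (pairBox L z) ↔ Φ z.1.1 ∈ L (z.2, true) ∧ Φ z.1.2 ∈ L (z.2, false) := by
  simp only [mem_piFinset, pairBox, cylinder, mem_inter]
  refine ⟨fun h => ⟨by simpa using (h z.1.1).1, by simpa using (h z.1.2).2⟩,
    fun h c => ⟨?_, ?_⟩⟩ <;> split_ifs with hc <;> simp [hc, h]

lemma piFinset_pairBox (z : (Fin m × Fin m) × ι) :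
    piFinset (pairBox L z) =
      piFinset (cylinder z.1.1 (L (z.2, true))) ∩ piFinset (cylinder z.1.2 (L (z.2, false))) :=
  piFinset_inter _ _

lemma pairBox_of_ne {z : (Fin m × Fin m) × ι} {c : Fin m} (h₁ : c ≠ z.1.1) (h₂ : c ≠ z.1.2) :
    pairBox L z c = univ := by
  simp [pairBox, cylinder, h₁, h₂]

lemma seqProb_pairBox (hw : ∑ c, w c = 1) {z : (Fin m × Fin m) × ι} (hz : z.1.1 ≠ z.1.2) :
    seqProb w (piFinset (pairBox L z)) =
      (∑ c ∈ L (z.2, true), w c) * ∑ c ∈ L (z.2, false), w c := by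
  rw [piFinset_pairBox, seqProb_piFinset_inter hw, seqProb_cylinder hw,
    seqProb_cylinder hw]
  intro c
  by_cases hc : c = z.1.1
  · subst hc; simp [cylinder, hz]
  · simp [cylinder, hc]

lemma seqProb_pairBox_inter_cylinder (hw : ∑ c, w c = 1) {z : (Fin m × Fin m) × ι} {c : Fin m}
    (h₁ : c ≠ z.1.1) (h₂ : c ≠ z.1.2) (A : Finset K) :
    seqProb w (piFinset (pairBox L z) ∩ piFinset (cylinder c A)) =
      seqProb w (piFinset (pairBox L z)) * ∑ x ∈ A, w x := by
  rw [seqProb_piFinset_inter hw, seqProb_cylinder hw]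
  intro d
  by_cases hd : d = c
  · subst hd; exact .inl (pairBox_of_ne h₁ h₂)
  · simp [cylinder, hd]

lemma seqProb_pairBox_inter_of_disjoint (hw : ∑ c, w c = 1) {z z' : (Fin m × Fin m) × ι}
    (h : ∀ c, c = z.1.1 ∨ c = z.1.2 → c ≠ z'.1.1 ∧ c ≠ z'.1.2) :
    seqProb w (piFinset (pairBox L z) ∩ piFinset (pairBox L z')) =
      seqProb w (piFinset (pairBox L z)) * seqProb w (piFinset (pairBox L z')) := by
  refine seqProb_piFinset_inter hw fun c => ?_
  by_cases hc : c = z.1.1 ∨ c = z.1.2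
  · exact .inr (pairBox_of_ne (h c hc).1 (h c hc).2)
  · rw [not_or] at hc
    exact .inl (pairBox_of_ne hc.1 hc.2)

lemma seqProb_pairBox_inter_le_of_subset_cylinder (hw₀ : ∀ c, 0 ≤ w c) (hw : ∑ c, w c = 1)
    {z : (Fin m × Fin m) × ι} {c : Fin m} (h₁ : c ≠ z.1.1) (h₂ : c ≠ z.1.2) {A : Finset K}
    {S : Finset (Fin m → K)} (hS : S ⊆ piFinset (cylinder c A)) :
    seqProb w (piFinset (pairBox L z) ∩ S) ≤ seqProb w (piFinset (pairBox L z)) * ∑ x ∈ A, w x :=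
  (seqProb_mono hw₀ (inter_subset_inter_left hS)).trans_eq
    (seqProb_pairBox_inter_cylinder hw h₁ h₂ A)

/-- Two pair events that share a draw can only both occur if they agree on the type and on the
role of the shared draw; the other draw of the second event is then a fresh one. -/
lemma seqProb_pairBox_inter_le_of_overlap (hw₀ : ∀ c, 0 ≤ w c) (hw : ∑ c, w c = 1)
    (hL : Pairwise (Disjoint on L)) {Q : ℝ} (hQ : ∀ x, ∑ c ∈ L x, w c ≤ Q)
    {z z' : (Fin m × Fin m) × ι} (hz' : z'.1.1 ≠ z'.1.2) (hne : z' ≠ z)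
    (hover : ∃ c, (c = z.1.1 ∨ c = z.1.2) ∧ (c = z'.1.1 ∨ c = z'.1.2)) :
    seqProb w (piFinset (pairBox L z) ∩ piFinset (pairBox L z')) ≤
      seqProb w (piFinset (pairBox L z)) *
        if z'.2 = z.2 ∧ (z'.1.1 = z.1.1 ∨ z'.1.2 = z.1.2) then Q else 0 := by
  obtain ⟨⟨j, j'⟩, i⟩ := z
  obtain ⟨⟨k, k'⟩, i'⟩ := z'
  rcases (piFinset (pairBox L ((j, j'), i)) ∩
    piFinset (pairBox L ((k, k'), i'))).eq_empty_or_nonempty with hempty | ⟨Φ, hΦ⟩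
  · have hQ₀ : 0 ≤ Q := (sum_nonneg fun c _ => hw₀ c).trans (hQ (i, true))
    rw [hempty, seqProb, Finset.sum_empty]
    exact mul_nonneg (seqProb_nonneg hw₀ _) (by split_ifs <;> simp [hQ₀])
  simp only [mem_inter, mem_piFinset_pairBox] at hΦ
  obtain ⟨⟨hj, hj'⟩, hk, hk'⟩ := hΦ
  have hsub₁ := (piFinset_pairBox (L := L) ((k, k'), i')).trans_subset inter_subset_left
  have hsub₂ := (piFinset_pairBox (L := L) ((k, k'), i')).trans_subset inter_subset_right
  simp only [ne_eq, Prod.mk.injEq, not_and] at hz' hne hover ⊢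
  obtain ⟨c, hc | hc, hc' | hc'⟩ := hover <;> subst hc <;> subst hc'
  · cases eq_of_mem_of_pairwise_disjoint hL hk hj
    rw [if_pos ⟨rfl, .inl rfl⟩]
    exact (seqProb_pairBox_inter_le_of_subset_cylinder hw₀ hw (Ne.symm hz')
      (fun h => hne ⟨rfl, h⟩ rfl) hsub₂).trans
      (mul_le_mul_of_nonneg_left (hQ _) (seqProb_nonneg hw₀ _))
  · cases eq_of_mem_of_pairwise_disjoint hL hk' hj
  · cases eq_of_mem_of_pairwise_disjoint hL hk hj'
  · cases eq_of_mem_of_pairwise_disjoint hL hk' hj'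
    rw [if_pos ⟨rfl, .inr rfl⟩]
    exact (seqProb_pairBox_inter_le_of_subset_cylinder hw₀ hw (fun h => hne ⟨h, rfl⟩ rfl)
      hz' hsub₁).trans (mul_le_mul_of_nonneg_left (hQ _) (seqProb_nonneg hw₀ _))

lemma seqProb_pairBox_inter_le (hw₀ : ∀ c, 0 ≤ w c) (hw : ∑ c, w c = 1)
    (hL : Pairwise (Disjoint on L)) {Q : ℝ} (hQ : ∀ x, ∑ c ∈ L x, w c ≤ Q)
    {z z' : (Fin m × Fin m) × ι} (hz' : z'.1.1 ≠ z'.1.2) :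
    seqProb w (piFinset (pairBox L z) ∩ piFinset (pairBox L z')) ≤
      seqProb w (piFinset (pairBox L z)) * (seqProb w (piFinset (pairBox L z')) +
        (if z' = z then 1 else 0) +
        if z'.2 = z.2 ∧ (z'.1.1 = z.1.1 ∨ z'.1.2 = z.1.2) then Q else 0) := by
  have hQ₀ : 0 ≤ Q := (sum_nonneg fun c _ => hw₀ c).trans (hQ (z.2, true))
  have hP := seqProb_nonneg hw₀ (piFinset (pairBox L z))
  have hP' := seqProb_nonneg hw₀ (piFinset (pairBox L z'))
  have hQ' : 0 ≤ if z'.2 = z.2 ∧ (z'.1.1 = z.1.1 ∨ z'.1.2 = z.1.2) then Q else 0 := by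
    split_ifs <;> simp [hQ₀]
  by_cases hover : ∃ c, (c = z.1.1 ∨ c = z.1.2) ∧ (c = z'.1.1 ∨ c = z'.1.2)
  · by_cases hne : z' = z
    · subst hne
      rw [inter_self, if_pos rfl]
      nlinarith
    · refine (seqProb_pairBox_inter_le_of_overlap hw₀ hw hL hQ hz' hne hover).trans ?_
      rw [if_neg hne]
      exact mul_le_mul_of_nonneg_left (by linarith) hP
  · rw [seqProb_pairBox_inter_of_disjoint hw fun c hc => ⟨fun h => hover ⟨c, hc, .inl h⟩,
      fun h => hover ⟨c, hc, .inr h⟩⟩]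
    refine mul_le_mul_of_nonneg_left ?_ hP
    split_ifs <;> linarith

lemma card_filter_pairs_le (Z : Finset ((Fin m × Fin m) × ι)) (j j' : Fin m) (i : ι) :
    #{z ∈ Z | z.2 = i ∧ (z.1.1 = j ∨ z.1.2 = j')} ≤ 2 * m := by
  calc _ ≤ #((({j} ×ˢ univ ∪ univ ×ˢ {j'}) : Finset (Fin m × Fin m)) ×ˢ {i}) := by
        refine card_le_card ?_
        rintro ⟨⟨k, k'⟩, i'⟩ hz
        obtain ⟨-, rfl, h⟩ := mem_filter.1 hz
        rcases h with rfl | rfl <;> simp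
    _ ≤ m + m := by
        rw [card_product, card_singleton, mul_one]
        refine (card_union_le _ _).trans ?_
        simp
    _ = 2 * m := by ring

theorem sum_sum_seqProb_pairBox_inter_le (hw₀ : ∀ c, 0 ≤ w c) (hw : ∑ c, w c = 1)
    (hL : Pairwise (Disjoint on L)) {Q : ℝ} (hQ : ∀ x, ∑ c ∈ L x, w c ≤ Q)
    {Z : Finset ((Fin m × Fin m) × ι)} (hZ : ∀ z ∈ Z, z.1.1 ≠ z.1.2) :
    ∑ z ∈ Z, ∑ z' ∈ Z, seqProb w (piFinset (pairBox L z) ∩ piFinset (pairBox L z')) ≤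
      (∑ z ∈ Z, seqProb w (piFinset (pairBox L z))) *
        (∑ z ∈ Z, seqProb w (piFinset (pairBox L z)) + (1 + 2 * m * Q)) := by
  rw [sum_mul]
  refine sum_le_sum fun z hz => ?_
  refine (sum_le_sum fun z' hz' => seqProb_pairBox_inter_le hw₀ hw hL hQ (hZ z' hz')).trans ?_
  rw [← mul_sum, sum_add_distrib, sum_add_distrib, Finset.sum_ite_eq' Z z, if_pos hz,
    ← sum_filter, sum_const, nsmul_eq_mul]
  have hQ₀ : 0 ≤ Q := (sum_nonneg fun c _ => hw₀ c).trans (hQ (z.2, true))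
  have hcard : (#{z' ∈ Z | z'.2 = z.2 ∧ (z'.1.1 = z.1.1 ∨ z'.1.2 = z.1.2)} : ℝ) ≤ 2 * m := by
    exact_mod_cast card_filter_pairs_le Z z.1.1 z.1.2 z.2
  exact mul_le_mul_of_nonneg_left (by nlinarith) (seqProb_nonneg hw₀ _)

lemma pairFree_subset_compl_biUnion (Z : Finset ((Fin m × Fin m) × ι)) :
    pairFree L ⊆ (Z.biUnion fun z => piFinset (pairBox L z))ᶜ := by
  intro Φ hΦ
  rw [mem_compl, mem_biUnion]
  rintro ⟨z, -, hz⟩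
  rw [mem_piFinset_pairBox] at hz
  exact mem_pairFree.1 hΦ z.2 _ _ hz.1 hz.2

lemma sum_seqProb_pairBox [Fintype ι] (hw : ∑ c, w c = 1) :
    ∑ z ∈ (univ : Finset (Fin m)).offDiag ×ˢ (univ : Finset ι),
        seqProb w (piFinset (pairBox L z)) =
      (m : ℝ) * (m - 1) * ∑ i, (∑ c ∈ L (i, true), w c) * ∑ c ∈ L (i, false), w c := by
  rw [sum_congr rfl fun z hz => seqProb_pairBox hw (mem_offDiag.1 (mem_product.1 hz).1).2.2,
    sum_product]
  dsimp only
  rw [sum_const, nsmul_eq_mul, offDiag_card, card_univ, Fintype.card_fin,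
    Nat.cast_sub (Nat.le_mul_self m)]
  push_cast
  ring

theorem seqProb_pairFree_le [Fintype ι] (hw₀ : ∀ c, 0 ≤ w c) (hw : ∑ c, w c = 1)
    (hL : Pairwise (Disjoint on L)) {Q : ℝ} (hQ : ∀ x, ∑ c ∈ L x, w c ≤ Q)
    (hT : 0 < (m : ℝ) * (m - 1) * ∑ i, (∑ c ∈ L (i, true), w c) * ∑ c ∈ L (i, false), w c) :
    seqProb w (pairFree L : Finset (Fin m → K)) ≤ (1 + 2 * m * Q) /
      ((m : ℝ) * (m - 1) * ∑ i, (∑ c ∈ L (i, true), w c) * ∑ c ∈ L (i, false), w c) := by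
  set Z := (univ : Finset (Fin m)).offDiag ×ˢ (univ : Finset ι)
  set U := Z.biUnion fun z => piFinset (pairBox L z)
  rw [← sum_seqProb_pairBox hw] at hT ⊢
  have hU : seqProb w U ≤ 1 := by linarith [seqProb_compl hw U, seqProb_nonneg hw₀ Uᶜ]
  refine (seqProb_mono hw₀ (pairFree_subset_compl_biUnion Z)).trans ?_
  rw [seqProb_compl hw]
  refine one_sub_le_div_of_sq_le_mul hU hT
    (sum_nonneg fun _ _ => sum_nonneg fun _ _ => seqProb_nonneg hw₀ _)
    (sq_sum_le_sum_biUnion_mul (fun _ => prod_nonneg fun _ _ => hw₀ _) Z _)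
    (sum_sum_seqProb_pairBox_inter_le hw₀ hw hL hQ fun z hz => ?_)
  exact (mem_offDiag.1 (mem_product.1 hz).1).2.2

end PairEvents

section TwoSat

variable {n m : ℕ} {p : ℕ → ℝ}

/-- The two encodings `(l, l')` and `(l', l)` of the clause `l ∨ l'`. -/
def clausePair (l l' : Fin n × Bool) : Finset ((Fin n × Bool) × (Fin n × Bool)) :=
  {(l, l'), (l', l)}

lemma pairwise_disjoint_clausePair (l : Fin n × Bool) : Pairwise (Disjoint on clausePair l) := by
  intro x y hxy
  simp only [onFun, clausePair, disjoint_insert_left, disjoint_insert_right, mem_insert,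
    mem_singleton, disjoint_singleton, Prod.mk.injEq, ne_eq]
  grind

lemma sum_clausePair (l l' : Fin n × Bool) :
    ∑ c ∈ clausePair l l', clauseProb2 n p c =
      if l.1 = l'.1 then 0 else Cconst n p / 2 * p l.1 * p l'.1 := by
  by_cases h : l.1 = l'.1
  · rw [if_pos h]
    refine sum_eq_zero fun c hc => ?_
    simp only [clausePair, mem_insert, mem_singleton] at hc
    rcases hc with rfl | rfl <;> simp [clauseProb2, h]
  · have hne : (l, l') ≠ (l', l) := fun h' => h (congrArg Prod.fst (Prod.mk.inj h').1)
    rw [if_neg h, clausePair, sum_pair hne, clauseProb2, clauseProb2, if_pos h, if_pos (Ne.symm h),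
      Cconst]
    ring

lemma clauseProb2_nonneg (hp : ∀ i < n, 0 < p i) (hC : 0 ≤ Cconst n p)
    (c : (Fin n × Bool) × (Fin n × Bool)) : 0 ≤ clauseProb2 n p c := by
  have h₁ := hp _ c.1.1.isLt
  have h₂ := hp _ c.2.1.isLt
  unfold clauseProb2
  split_ifs
  · unfold Cconst at hC; positivity
  · exact le_rfl

lemma sum_clauseProb2 (hsum : ∑ i ∈ range n, p i = 1) (hsq : ∑ i ∈ range n, p i ^ 2 ≠ 1) :
    ∑ c, clauseProb2 n p c = 1 := by
  set S := ∑ i ∈ range n, p i ^ 2 with hS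
  have h₁ : ∑ i : Fin n, p i = 1 := by rw [Fin.sum_univ_eq_sum_range]; exact hsum
  have h₂ : ∑ i : Fin n, p i ^ 2 = S := Fin.sum_univ_eq_sum_range (fun i => p i ^ 2) n
  have hsplit : ∑ c, clauseProb2 n p c =
      ∑ x : Fin n, ∑ y : Fin n, (1 - S)⁻¹ * (p x * p y - if x = y then p x ^ 2 else 0) := by
    simp only [clauseProb2, Fintype.sum_prod_type, Fintype.sum_bool, ← hS]
    refine sum_congr rfl fun x _ => ?_
    simp only [← sum_add_distrib]
    refine sum_congr rfl fun y _ => ?_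
    by_cases h : x = y
    · simp [h, sq]
    · simp only [ne_eq, h, not_false_eq_true, if_true, if_false, sub_zero]
      ring
  rw [hsplit]
  simp only [← mul_sum, sum_sub_distrib, Finset.sum_ite_eq, mem_univ, if_true, h₁, mul_one, h₂]
  field_simp [sub_ne_zero.2 hsq.symm]

lemma apply_eq_of_mem_clausePair {a : Fin n → Bool} {l : Fin n × Bool} {i : Fin n}
    {c c' : (Fin n × Bool) × (Fin n × Bool)} (hc : c ∈ clausePair l (i, true))
    (hc' : c' ∈ clausePair l (i, false)) (ha : a c.1.1 = c.1.2 ∨ a c.2.1 = c.2.2)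
    (ha' : a c'.1.1 = c'.1.2 ∨ a c'.2.1 = c'.2.2) : a l.1 = l.2 := by
  simp only [clausePair, mem_insert, mem_singleton] at hc hc'
  rcases hc with rfl | rfl <;> rcases hc' with rfl | rfl <;> cases h : a i <;> simp_all

lemma filter_sat2_subset_union_pairFree (x : Fin n) :
    ({Φ | Sat2 Φ} : Finset (Fin m → (Fin n × Bool) × (Fin n × Bool))) ⊆
      pairFree (clausePair (x, true)) ∪ pairFree (clausePair (x, false)) := by
  intro Φ hΦ
  obtain ⟨a, ha⟩ := (mem_filter.1 hΦ).2
  by_contra hfree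
  simp only [mem_union, mem_pairFree, not_or, not_forall, not_not] at hfree
  obtain ⟨⟨i, j, j', hj, hj'⟩, ⟨i', k, k', hk, hk'⟩⟩ := hfree
  have h₁ := apply_eq_of_mem_clausePair hj hj' (ha j) (ha j')
  have h₂ := apply_eq_of_mem_clausePair hk hk' (ha k) (ha k')
  simp_all

lemma probSat2_eq_seqProb :
    probSat2 n m p = seqProb (m := m) (clauseProb2 n p) {Φ | Sat2 Φ} := by
  rw [probSat2, seqProb, sum_filter]
  rfl

lemma probUnsat2_eq (hw : ∑ c, clauseProb2 n p c = 1) :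
    probUnsat2 n m p = 1 - probSat2 n m p := by
  rw [probSat2_eq_seqProb, ← seqProb_compl hw, probUnsat2, seqProb, ← sum_filter,
    filter_not, compl_eq_univ_sdiff]
  rfl

end TwoSat

section ProbVector

variable {n : ℕ} {p : ℕ → ℝ}

noncomputable def coarseRate (n : ℕ) (p : ℕ → ℝ) : ℝ :=
  Cconst n p * p 0 * √(∑ i ∈ Ico 1 n, p i ^ 2)

lemma sum_range_eq_add_sum_Ico {M : Type*} [AddCommMonoid M] {f : ℕ → M} (hn : 1 ≤ n) :
    ∑ i ∈ range n, f i = f 0 + ∑ i ∈ Ico 1 n, f i := by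
  rw [range_eq_Ico, sum_eq_sum_Ico_succ_bot (by omega)]

lemma sum_univ_ite_eq_sum_Ico {M : Type*} [AddCommGroup M] (hn : 1 ≤ n) (f : ℕ → M) :
    ∑ i : Fin n, (if (⟨0, hn⟩ : Fin n) = i then 0 else f i) = ∑ i ∈ Ico 1 n, f i := by
  have h : ∀ i : Fin n, (if (⟨0, hn⟩ : Fin n) = i then 0 else f i) =
      f i - if (⟨0, hn⟩ : Fin n) = i then f i else 0 := fun i => by split_ifs <;> simp
  rw [sum_congr rfl fun i _ => h i, sum_sub_distrib, Finset.sum_ite_eq, if_pos (mem_univ _),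
    Fin.sum_univ_eq_sum_range f, sum_range_eq_add_sum_Ico hn]
  abel

lemma le_sqrt_sum_sq {ι : Type*} {s : Finset ι} {f : ι → ℝ} {i : ι} (hi : i ∈ s) :
    f i ≤ √(∑ j ∈ s, f j ^ 2) :=
  Real.le_sqrt_of_sq_le (single_le_sum (fun j _ => sq_nonneg (f j)) hi)

lemma add_sqrt_sum_Ico_sq_le_one (hn : 1 ≤ n) (hsum : ∑ i ∈ range n, p i = 1)
    (hp : ∀ i < n, 0 < p i) : p 0 + √(∑ i ∈ Ico 1 n, p i ^ 2) ≤ 1 := by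
  have hnn : ∀ i ∈ Ico 1 n, 0 ≤ p i := fun i hi => (hp i (mem_Ico.1 hi).2).le
  have hrest : ∑ i ∈ Ico 1 n, p i = 1 - p 0 := by
    rw [sum_range_eq_add_sum_Ico hn] at hsum
    linarith
  have : √(∑ i ∈ Ico 1 n, p i ^ 2) ≤ 1 - p 0 := by
    rw [← hrest, Real.sqrt_le_left (sum_nonneg hnn)]
    exact sum_sq_le_sq_sum_of_nonneg hnn
  linarith

lemma two_mul_sqrt_le_one_sub_sum_sq (hn : 1 ≤ n) (hsum : ∑ i ∈ range n, p i = 1)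
    (hp : ∀ i < n, 0 < p i) :
    2 * p 0 * √(∑ i ∈ Ico 1 n, p i ^ 2) ≤ 1 - ∑ i ∈ range n, p i ^ 2 := by
  have hle := add_sqrt_sum_Ico_sq_le_one hn hsum hp
  have hs := Real.sqrt_nonneg (∑ i ∈ Ico 1 n, p i ^ 2)
  have hp₀ := hp 0 (by omega)
  rw [sum_range_eq_add_sum_Ico hn]
  nlinarith [Real.sq_sqrt (sum_nonneg fun i (_ : i ∈ Ico 1 n) => sq_nonneg (p i))]

lemma sqrt_sum_Ico_sq_pos (hn : 2 ≤ n) (hp : ∀ i < n, 0 < p i) :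
    0 < √(∑ i ∈ Ico 1 n, p i ^ 2) :=
  (hp 1 hn).trans_le (le_sqrt_sum_sq (mem_Ico.2 ⟨le_rfl, hn⟩))

lemma one_sub_sum_sq_pos (hn : 2 ≤ n) (hsum : ∑ i ∈ range n, p i = 1) (hp : ∀ i < n, 0 < p i) :
    0 < 1 - ∑ i ∈ range n, p i ^ 2 := by
  have hp₀ := hp 0 (by omega)
  have hs := sqrt_sum_Ico_sq_pos hn hp
  exact (by positivity : 0 < 2 * p 0 * _).trans_le
    (two_mul_sqrt_le_one_sub_sum_sq (by omega) hsum hp)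

lemma coarseRate_pos (hn : 2 ≤ n) (hsum : ∑ i ∈ range n, p i = 1) (hp : ∀ i < n, 0 < p i) :
    0 < coarseRate n p := by
  have hp₀ := hp 0 (by omega)
  have hs := sqrt_sum_Ico_sq_pos hn hp
  have hD := one_sub_sum_sq_pos hn hsum hp
  unfold coarseRate Cconst
  positivity

lemma coarseRate_le_half (hn : 2 ≤ n) (hsum : ∑ i ∈ range n, p i = 1) (hp : ∀ i < n, 0 < p i) :
    coarseRate n p ≤ 1 / 2 := by
  unfold coarseRate Cconst
  rw [mul_assoc, inv_mul_le_iff₀ (one_sub_sum_sq_pos hn hsum hp)]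
  linarith [two_mul_sqrt_le_one_sub_sum_sq (by omega) hsum hp]

end ProbVector

section TwoSatBound

variable {n m : ℕ} {p : ℕ → ℝ}

lemma sum_clausePair_le (hn : 2 ≤ n) (hsum : ∑ i ∈ range n, p i = 1) (hp : ∀ i < n, 0 < p i)
    (s : Bool) (x : Fin n × Bool) :
    ∑ c ∈ clausePair (⟨0, by omega⟩, s) x, clauseProb2 n p c ≤ coarseRate n p / 2 := by
  have hC := (inv_pos.2 (one_sub_sum_sq_pos hn hsum hp)).le
  have hp₀ := hp 0 (by omega)
  have hs := Real.sqrt_nonneg (∑ i ∈ Ico 1 n, p i ^ 2)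
  rw [sum_clausePair, coarseRate]
  split_ifs with hx
  · positivity
  · have hx₁ : (x.1 : ℕ) ∈ Ico 1 n :=
      mem_Ico.2 ⟨Nat.one_le_iff_ne_zero.2 fun h => hx (Fin.ext h.symm), x.1.isLt⟩
    have hC' : 0 ≤ Cconst n p / 2 * p 0 := by unfold Cconst at hC ⊢; positivity
    nlinarith [mul_le_mul_of_nonneg_left (le_sqrt_sum_sq (f := p) hx₁) hC']

lemma sum_clausePair_mul_sum_clausePair (h₀ : 0 < n) (s : Bool) :
    ∑ i, (∑ c ∈ clausePair (⟨0, h₀⟩, s) (i, true), clauseProb2 n p c) *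
      ∑ c ∈ clausePair (⟨0, h₀⟩, s) (i, false), clauseProb2 n p c = coarseRate n p ^ 2 / 4 := by
  have hsq : ∀ (a : ℝ) (i : Fin n), (if (⟨0, h₀⟩ : Fin n) = i then 0 else a * p i) *
      (if (⟨0, h₀⟩ : Fin n) = i then 0 else a * p i) =
        a ^ 2 * if (⟨0, h₀⟩ : Fin n) = i then 0 else p i ^ 2 := fun a i => by split_ifs <;> ring
  simp only [sum_clausePair, hsq, ← mul_sum]
  rw [sum_univ_ite_eq_sum_Ico h₀ fun i => p i ^ 2, coarseRate, mul_pow, mul_pow,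
    Real.sq_sqrt (sum_nonneg fun i _ => sq_nonneg (p i))]
  ring

lemma seqProb_pairFree_clausePair_le (hn : 2 ≤ n) (hsum : ∑ i ∈ range n, p i = 1)
    (hp : ∀ i < n, 0 < p i) (hm : 2 ≤ m) (s : Bool) :
    seqProb (clauseProb2 n p) (pairFree (clausePair (⟨0, by omega⟩, s)) : Finset (Fin m → _)) ≤
      8 * (1 + m * coarseRate n p) / (m * coarseRate n p) ^ 2 := by
  have hX := coarseRate_pos hn hsum hp
  have hm' : (2 : ℝ) ≤ m := by exact_mod_cast hm
  have hT : 0 < (m : ℝ) * (m - 1) * (coarseRate n p ^ 2 / 4) := by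
    have : (0 : ℝ) < m - 1 := by linarith
    positivity
  have hmean := sum_clausePair_mul_sum_clausePair (n := n) (p := p) (by omega) s
  refine (seqProb_pairFree_le (clauseProb2_nonneg hp (inv_pos.2 (one_sub_sum_sq_pos hn hsum hp)).le)
    (sum_clauseProb2 hsum (sub_pos.1 (one_sub_sum_sq_pos hn hsum hp)).ne)
    (pairwise_disjoint_clausePair _) (sum_clausePair_le hn hsum hp s) (by rwa [hmean])).trans ?_
  rw [hmean, div_le_div_iff₀ hT (by positivity)]
  have hm2 : (m : ℝ) ^ 2 ≤ 2 * m * (m - 1) := by nlinarith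
  nlinarith [mul_le_mul_of_nonneg_left hm2
    (by positivity : 0 ≤ (1 + m * coarseRate n p) * coarseRate n p ^ 2)]

theorem probSat2_le (hn : 2 ≤ n) (hsum : ∑ i ∈ range n, p i = 1) (hp : ∀ i < n, 0 < p i)
    (hm : 2 ≤ m) :
    probSat2 n m p ≤ 16 * (1 + m * coarseRate n p) / (m * coarseRate n p) ^ 2 := by
  have hw₀ := clauseProb2_nonneg hp (inv_pos.2 (one_sub_sum_sq_pos hn hsum hp)).le
  set x₀ : Fin n := ⟨0, by omega⟩
  calc probSat2 n m p
      ≤ seqProb (clauseProb2 n p)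
          (pairFree (clausePair (x₀, true)) ∪ pairFree (clausePair (x₀, false))) := by
        rw [probSat2_eq_seqProb]
        exact seqProb_mono hw₀ (filter_sat2_subset_union_pairFree x₀)
    _ ≤ 8 * (1 + m * coarseRate n p) / (m * coarseRate n p) ^ 2 +
          8 * (1 + m * coarseRate n p) / (m * coarseRate n p) ^ 2 :=
        (seqProb_union_le hw₀ _ _).trans
          (add_le_add (seqProb_pairFree_clausePair_le hn hsum hp hm true)
            (seqProb_pairFree_clausePair_le hn hsum hp hm false))
    _ = 16 * (1 + m * coarseRate n p) / (m * coarseRate n p) ^ 2 := by ring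

lemma probSat2_nonneg (hn : 2 ≤ n) (hsum : ∑ i ∈ range n, p i = 1) (hp : ∀ i < n, 0 < p i) :
    0 ≤ probSat2 n m p :=
  probSat2_eq_seqProb ▸
    seqProb_nonneg (clauseProb2_nonneg hp (inv_pos.2 (one_sub_sum_sq_pos hn hsum hp)).le) _

end TwoSatBound

lemma tendsto_mul_atTop_of_inv_isLittleO {α : Type*} {l : Filter α} {x g : α → ℝ}
    (hx : ∀ᶠ a in l, 0 < x a) (hg : ∀ᶠ a in l, 0 ≤ g a) (h : (fun a => (x a)⁻¹) =o[l] g) :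
    Tendsto (fun a => g a * x a) l atTop := by
  have hpos : ∀ᶠ a in l, 0 < (x a)⁻¹ / g a := by
    filter_upwards [hx, hg, h.def one_pos] with a hxa hga hle
    have hxa' := inv_pos.2 hxa
    rw [Real.norm_of_nonneg hxa'.le, Real.norm_of_nonneg hga, one_mul] at hle
    exact div_pos hxa' (hxa'.trans_le hle)
  refine (tendsto_nhdsWithin_iff.2 ⟨h.tendsto_div_nhds_zero, hpos⟩).inv_tendsto_nhdsGT_zero.congr
    fun a => ?_
  simp only [Pi.inv_apply, inv_div, div_inv_eq_mul]

lemma tendsto_const_mul_one_add_div_sq {α : Type*} {l : Filter α} {t : α → ℝ}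
    (ht : Tendsto t l atTop) (c : ℝ) : Tendsto (fun a => c * (1 + t a) / t a ^ 2) l (nhds 0) := by
  have hinv := tendsto_inv_atTop_zero.comp ht
  have := ((hinv.pow 2).add hinv).const_mul c
  rw [zero_pow two_ne_zero, add_zero, mul_zero] at this
  refine this.congr' ?_
  filter_upwards [ht.eventually_gt_atTop 0] with a ha
  simp only [comp_apply]
  field_simp

theorem nonuniform_2SAT_unsat_above_coarse_threshold_general
    (p : ℕ → ℕ → ℝ) (hp : ProbEnsemble p)
    (m : ℕ → ℕ)
    (hm : (fun n => coarseBound p n) =o[atTop] fun n => (m n : ℝ)) :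
    Tendsto (fun n => probUnsat2 n (m n) (p n)) atTop (nhds 1) := by
  have hvec : ∀ᶠ n in atTop, 2 ≤ n ∧ (∑ i ∈ range n, p n i = 1) ∧ ∀ i < n, 0 < p n i :=
    eventually_atTop.2 ⟨2, fun n hn => ⟨hn, (hp n (by omega)).1, (hp n (by omega)).2.2⟩⟩
  set t := fun n => (m n : ℝ) * coarseRate n (p n)
  have ht : Tendsto t atTop atTop :=
    tendsto_mul_atTop_of_inv_isLittleO (hvec.mono fun n h => coarseRate_pos h.1 h.2.1 h.2.2)
      (.of_forall fun n => Nat.cast_nonneg _) hm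
  have hm₂ : ∀ᶠ n in atTop, 2 ≤ m n := by
    filter_upwards [hvec, ht.eventually_ge_atTop 1] with n h ht₁
    have := coarseRate_le_half h.1 h.2.1 h.2.2
    have : (2 : ℝ) ≤ m n := by nlinarith [(Nat.cast_nonneg (m n) : (0 : ℝ) ≤ m n)]
    exact_mod_cast this
  have hsat : Tendsto (fun n => probSat2 n (m n) (p n)) atTop (nhds 0) := by
    refine squeeze_zero' ?_ ?_ (tendsto_const_mul_one_add_div_sq ht 16)
    · filter_upwards [hvec] with n h using probSat2_nonneg h.1 h.2.1 h.2.2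
    · filter_upwards [hvec, hm₂] with n h hmn using probSat2_le h.1 h.2.1 h.2.2 hmn
  have := (tendsto_const_nhds (x := (1 : ℝ))).sub hsat
  rw [sub_zero] at this
  refine this.congr' ?_
  filter_upwards [hvec] with n h
  exact (probUnsat2_eq (sum_clauseProb2 h.2.1
    (sub_pos.1 (one_sub_sum_sq_pos h.1 h.2.1 h.2.2)).ne)).symm

/-- For `p₁² = Θ(∑_{i=1}^n pᵢ²)`, `p₂² = o(∑_{i=2}^n pᵢ²)` and
`m = ω((C·p₁·(∑_{i=2}^n pᵢ²)^{1/2})⁻¹)`, the random formula is unsatisfiable with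
probability `1 - o(1)`. -/
theorem nonuniform_2SAT_unsat_above_coarse_threshold
    (p : ℕ → ℕ → ℝ) (hp : ProbEnsemble p)
    (hΘ : (fun n => p n 0 ^ 2) =Θ[atTop] fun n => ∑ i ∈ Finset.range n, p n i ^ 2)
    (ho : (fun n => p n 1 ^ 2) =o[atTop] fun n => ∑ i ∈ Finset.Ico 1 n, p n i ^ 2)
    (m : ℕ → ℕ)
    (hm : (fun n => coarseBound p n) =o[atTop] fun n => (m n : ℝ)) :
    Tendsto (fun n => probUnsat2 n (m n) (p n)) atTop (nhds 1) :=
  nonuniform_2SAT_unsat_above_coarse_threshold_general p hp m hm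
end

section
/- Let a₁, a₂, …, a_N be nonnegative real numbers, let a* = max_i aᵢ, let 1 ≤ t ≤ N, and assume Σ_{i=1}^N aᵢ ≥ t·a*. Then the elementary symmetric sum satisfies Σ_{S ⊆ [N], |S| = t} Π_{i∈S} aᵢ ≥ (1/t!)·(Σ_{i=1}^N aᵢ − t·a*)^t. -/
/-!
Induction on `t`, driven by the identity `∑ᵢ aᵢ · e_t(a without i) = (t + 1) · e_{t+1}(a)`.
Deleting one index lowers `∑ a - t·a*` by at most `a*`, so the induction hypothesis applied to
each `e_t(a without i)` gives at least `(∑ a - (t + 1)·a*)^t / t!`, and multiplying by `∑ aᵢ`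
gains the last factor.
-/

open Finset

section

variable {ι : Type*} [DecidableEq ι]

theorem filter_mem_powersetCard_succ {B : Finset ι} {i : ι} (hi : i ∈ B) (t : ℕ) :
    {S ∈ B.powersetCard (t + 1) | i ∈ S} = ((B.erase i).powersetCard t).image (insert i) := by
  have h := filter_powersetCard_subset {i} B (t + 1) (singleton_subset_iff.2 hi) (by simp)
  simpa only [singleton_subset_iff, card_singleton, add_tsub_cancel_right,
    sdiff_singleton_eq_erase, union_singleton] using h

variable {R : Type*}

theorem sum_filter_mem_powersetCard_succ [CommSemiring R] {B : Finset ι} {i : ι} (hi : i ∈ B)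
    (a : ι → R) (t : ℕ) :
    ∑ S ∈ B.powersetCard (t + 1) with i ∈ S, ∏ j ∈ S, a j
      = a i * ∑ S ∈ (B.erase i).powersetCard t, ∏ j ∈ S, a j := by
  rw [filter_mem_powersetCard_succ hi, sum_image, mul_sum]
  · exact sum_congr rfl fun S hS =>
      prod_insert (notMem_mono (mem_powersetCard.1 hS).1 (notMem_erase i B))
  · intro S hS T hT hST
    have hiS := notMem_mono (mem_powersetCard.1 hS).1 (notMem_erase i B)
    have hiT := notMem_mono (mem_powersetCard.1 hT).1 (notMem_erase i B)
    rw [← erase_insert hiS, ← erase_insert hiT]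
    exact congrArg (·.erase i) hST

theorem sum_mul_sum_powersetCard_erase [CommSemiring R] (B : Finset ι) (a : ι → R) (t : ℕ) :
    ∑ i ∈ B, a i * ∑ S ∈ (B.erase i).powersetCard t, ∏ j ∈ S, a j
      = (t + 1) * ∑ S ∈ B.powersetCard (t + 1), ∏ j ∈ S, a j := by
  calc ∑ i ∈ B, a i * ∑ S ∈ (B.erase i).powersetCard t, ∏ j ∈ S, a j
      = ∑ i ∈ B, ∑ S ∈ B.powersetCard (t + 1) with i ∈ S, ∏ j ∈ S, a j :=
        (sum_congr rfl fun i hi => (sum_filter_mem_powersetCard_succ hi a t).symm)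
    _ = ∑ S ∈ B.powersetCard (t + 1), ∑ _i ∈ S, ∏ j ∈ S, a j := by
        refine sum_comm' fun i S => ?_
        rw [mem_filter, mem_powersetCard]
        exact ⟨fun ⟨_, hS, hiS⟩ => ⟨hiS, hS⟩, fun ⟨hiS, hS⟩ => ⟨hS.1 hiS, hS, hiS⟩⟩
    _ = (t + 1) * ∑ S ∈ B.powersetCard (t + 1), ∏ j ∈ S, a j := by
        rw [mul_sum]
        refine sum_congr rfl fun S hS => ?_
        rw [sum_const, (mem_powersetCard.1 hS).2, nsmul_eq_mul]
        push_cast; ring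

open Nat in
theorem pow_div_factorial_le_sum_powersetCard [Field R] [LinearOrder R] [IsStrictOrderedRing R]
    {a : ι → R} {M : R} (hM : 0 ≤ M) (t : ℕ) {B : Finset ι} (ha : ∀ i ∈ B, 0 ≤ a i)
    (haM : ∀ i ∈ B, a i ≤ M) (hsum : t * M ≤ ∑ i ∈ B, a i) :
    (∑ i ∈ B, a i - t * M) ^ t / t ! ≤ ∑ S ∈ B.powersetCard t, ∏ i ∈ S, a i := by
  induction t generalizing B with
  | zero => simp
  | succ t ih =>
    push_cast at hsum ⊢
    set X := ∑ i ∈ B, a i - (t + 1) * M with hXdef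
    have hX : 0 ≤ X := sub_nonneg.2 hsum
    have herase : ∀ i ∈ B, X ^ t / t ! ≤ ∑ S ∈ (B.erase i).powersetCard t, ∏ j ∈ S, a j := by
      intro i hi
      have hle : X ≤ ∑ j ∈ B.erase i, a j - t * M := by
        rw [sum_erase_eq_sub hi]; linarith [haM i hi]
      refine le_trans ?_ (ih (fun j hj => ha j (mem_of_mem_erase hj))
        (fun j hj => haM j (mem_of_mem_erase hj)) (sub_nonneg.1 (hX.trans hle)))
      gcongr
    calc X ^ (t + 1) / (t + 1)! = X * (X ^ t / t !) / (t + 1) := by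
          rw [factorial_succ]; push_cast; field_simp; ring
      _ ≤ (∑ i ∈ B, a i) * (X ^ t / t !) / (t + 1) := by
          gcongr; exact sub_le_self _ (by positivity)
      _ ≤ (∑ i ∈ B, a i * ∑ S ∈ (B.erase i).powersetCard t, ∏ j ∈ S, a j) / (t + 1) := by
          rw [sum_mul]; gcongr with i hi; exacts [ha i hi, herase i hi]
      _ = ∑ S ∈ B.powersetCard (t + 1), ∏ i ∈ S, a i := by
          rw [sum_mul_sum_powersetCard_erase]; field_simp

end

/-- Elementary symmetric sum lower bound: for nonnegative `a₁,…,a_N` with maximum `a*`,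
`1 ≤ t ≤ N` and `∑ aᵢ ≥ t·a*`, we have
`∑_{|S|=t} ∏_{i∈S} aᵢ ≥ (1/t!)·(∑ aᵢ - t·a*)^t`. -/
theorem elementary_symmetric_lower_bound
    (N t : ℕ) (hN : 1 ≤ N)
    (a : ℕ → ℝ) (ha : ∀ i ∈ Finset.range N, 0 ≤ a i)
    (hsum : (t : ℝ) * (Finset.range N).sup' (Finset.nonempty_range_iff.mpr (by omega)) a
      ≤ ∑ i ∈ Finset.range N, a i) :
    (1 / (Nat.factorial t) : ℝ) *
        (∑ i ∈ Finset.range N, a i -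
          (t : ℝ) * (Finset.range N).sup' (Finset.nonempty_range_iff.mpr (by omega)) a) ^ t
      ≤ ∑ S ∈ Finset.powersetCard t (Finset.range N), ∏ i ∈ S, a i := by
  have h0 : 0 ∈ range N := mem_range.2 hN
  rw [one_div_mul_eq_div]
  exact pow_div_factorial_le_sum_powersetCard ((ha 0 h0).trans (le_sup' a h0)) t ha
    (fun i hi => le_sup' a hi) hsum
end
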